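/- arXiv:2507.06665 — 5 statements merged into one kernel-verified Lean document; each statement's English description precedes it below -/
import Mathlib

section
/- Let 0<α<1 and z>0 with f_α(·|z) the α-stable density with Laplace transform e^{-z x^α}. Then the convolution identity {ρ_{1-α} ⋆ f_α(·|z)}(u) = (1/Γ(1-α)) ∫₀^u (u-v)^{-α} f_α(v|z) dv = u f_α(u|z)/(zα) holds for almost every u>0. -/
open MeasureTheory Real Set Filter
open scoped ContDiff ENNReal

lemma rsci_mul_exp_le {x u : ℝ} (hc : 0 < x) : u * Real.exp (-(x*u)) ≤ 1/x := by
  rw [le_div_iff₀ hc]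
  have h1 : x * u ≤ Real.exp (x*u) := (Real.add_one_le_exp (x*u)).trans' (by linarith)
  calc u * Real.exp (-(x*u)) * x = (x*u) * Real.exp (-(x*u)) := by ring
    _ ≤ Real.exp (x*u) * Real.exp (-(x*u)) :=
        mul_le_mul_of_nonneg_right h1 (Real.exp_pos _).le
    _ = 1 := by rw [← Real.exp_add]; simp


lemma rsci_meas_exp (x : ℝ) : Measurable fun u : ℝ => Real.exp (-(x*u)) :=
  Real.measurable_exp.comp ((measurable_id.const_mul x).neg)

lemma rsci_meas_exp2 (x : ℝ) : Measurable fun p : ℝ × ℝ => Real.exp (-(x*p.1)) :=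
  (rsci_meas_exp x).comp measurable_fst

lemma rsci_meas_rpowc (α : ℝ) : Measurable fun y : ℝ => y ^ (-α) := by measurability

lemma rsci_meas_rpow (α v : ℝ) : Measurable fun u : ℝ => (u - v) ^ (-α) :=
  (rsci_meas_rpowc α).comp (measurable_id.sub_const v)

lemma rsci_meas_rpow' (α u : ℝ) : Measurable fun v : ℝ => (u - v) ^ (-α) :=
  (rsci_meas_rpowc α).comp (measurable_const.sub measurable_id)

lemma rsci_meas_rpow2 (α : ℝ) : Measurable fun p : ℝ × ℝ => (p.1 - p.2) ^ (-α) :=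
  (rsci_meas_rpowc α).comp (measurable_fst.sub measurable_snd)

lemma rsci_gamma_int (α : ℝ) (hα₀ : 0 < α) (hα₁ : α < 1) (x : ℝ) (hx : 0 < x) :
    IntegrableOn (fun s => s ^ (-α) * Real.exp (-(x * s))) (Ioi 0) ∧
    ∫ s in Ioi (0:ℝ), s ^ (-α) * Real.exp (-(x * s)) = Real.Gamma (1-α) * x ^ (α-1) := by
  have h1 := integrableOn_rpow_mul_exp_neg_mul_rpow (p:=1) (s:=-α) (b:=x) (by linarith) one_pos hx
  have h2 := integral_rpow_mul_exp_neg_mul_rpow (p:=1) (q:=-α) (b:=x) one_pos (by linarith) hx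
  constructor
  · refine h1.congr_fun (fun s _ => ?_) measurableSet_Ioi
    dsimp only
    rw [Real.rpow_one, neg_mul]
  · have e1 : ∫ s in Ioi (0:ℝ), s ^ (-α) * Real.exp (-(x * s))
        = ∫ s in Ioi (0:ℝ), s ^ (-α) * Real.exp (-x * s ^ (1:ℝ)) := by
      refine setIntegral_congr_fun measurableSet_Ioi (fun s _ => ?_)
      rw [Real.rpow_one, neg_mul]
    rw [e1, h2]
    have e2 : (-(-α + 1) / 1 : ℝ) = α - 1 := by ring
    have e3 : ((-α + 1) / 1 : ℝ) = 1 - α := by ring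
    rw [e2, e3]; ring

lemma rsci_gammaV (α : ℝ) (hα₀ : 0 < α) (hα₁ : α < 1) (x : ℝ) (hx : 0 < x) (v : ℝ) :
    ∫⁻ u in Ioi v, ENNReal.ofReal (Real.exp (-(x*u)) * (u - v) ^ (-α))
      = ENNReal.ofReal (Real.exp (-(x*v)) * (Real.Gamma (1-α) * x ^ (α-1))) := by
  have hmeas : Measurable fun u : ℝ => ENNReal.ofReal (Real.exp (-(x*u)) * (u - v) ^ (-α)) :=
    ((rsci_meas_exp x).mul (rsci_meas_rpow α v)).ennreal_ofReal
  rw [show (volume : Measure ℝ) = Measure.map (· + v) volume from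
      (map_add_right_eq_self volume v).symm,
    setLIntegral_map measurableSet_Ioi hmeas (measurable_add_const v)]
  have hpre : (· + v) ⁻¹' (Ioi v) = Ioi 0 := by ext s; simp
  rw [hpre]
  have hptw : ∀ s ∈ Ioi (0:ℝ), ENNReal.ofReal (Real.exp (-(x*(s+v))) * (s + v - v) ^ (-α))
      = ENNReal.ofReal (Real.exp (-(x*v))) * ENNReal.ofReal (s ^ (-α) * Real.exp (-(x*s))) := by
    intro s _
    have hss : s + v - v = s := by ring
    have hexp : Real.exp (-(x*(s+v))) = Real.exp (-(x*v)) * Real.exp (-(x*s)) := by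
      rw [← Real.exp_add]; congr 1; ring
    rw [hss, hexp, ← ENNReal.ofReal_mul (Real.exp_pos _).le]
    congr 1; ring
  rw [setLIntegral_congr_fun measurableSet_Ioi hptw,
    lintegral_const_mul' _ _ ENNReal.ofReal_ne_top]
  have hnn : 0 ≤ᵐ[volume.restrict (Ioi (0:ℝ))] fun s => s ^ (-α) * Real.exp (-(x*s)) := by
    filter_upwards [ae_restrict_mem measurableSet_Ioi] with s hs
    exact mul_nonneg (Real.rpow_nonneg (le_of_lt hs) _) (Real.exp_pos _).le
  rw [← ofReal_integral_eq_lintegral_ofReal (rsci_gamma_int α hα₀ hα₁ x hx).1 hnn,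
    (rsci_gamma_int α hα₀ hα₁ x hx).2, ← ENNReal.ofReal_mul (Real.exp_pos _).le]

lemma rsci_stepA (α z : ℝ) (hα₀ : 0 < α) (hα₁ : α < 1) (hz : 0 < z)
    (g : ℝ → ℝ) (hgm : Measurable g) (hg0 : ∀ t, 0 ≤ g t)
    (hgint : ∀ x : ℝ, 0 ≤ x → IntegrableOn (fun t => Real.exp (-(x*t)) * g t) (Ioi 0))
    (hgLT : ∀ x : ℝ, 0 ≤ x →
      ∫ t in Ioi (0:ℝ), Real.exp (-(x*t)) * g t = Real.exp (-(z * x ^ α)))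
    (x : ℝ) (hx : 0 < x) :
    IntegrableOn (fun u => Real.exp (-(x*u)) * ∫ v in Ioo (0:ℝ) u, (u - v) ^ (-α) * g v)
      (Ioi 0) ∧
    ∫ u in Ioi (0:ℝ), Real.exp (-(x*u)) * ∫ v in Ioo (0:ℝ) u, (u - v) ^ (-α) * g v
      = Real.Gamma (1-α) * x ^ (α-1) * Real.exp (-(z * x ^ α)) := by
  have h1α : 0 < 1 - α := by linarith
  set Γc : ℝ := Real.Gamma (1-α) * x ^ (α-1) with hΓc
  have hΓcpos : 0 < Γc := mul_pos (Real.Gamma_pos_of_pos h1α) (Real.rpow_pos_of_pos hx _)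
  set S : Set (ℝ × ℝ) := {p : ℝ × ℝ | 0 < p.2 ∧ p.2 < p.1} with hS
  have hSm : MeasurableSet S :=
    (measurableSet_lt measurable_const measurable_snd).inter
      (measurableSet_lt measurable_snd measurable_fst)
  set K : ℝ × ℝ → ℝ≥0∞ := S.indicator (fun p => ENNReal.ofReal ((p.1 - p.2) ^ (-α) * g p.2))
    with hK
  have hKm : Measurable K := by
    refine Measurable.indicator ?_ hSm
    exact ((rsci_meas_rpow2 α).mul (hgm.comp measurable_snd)).ennreal_ofReal
  have hKval : ∀ u v : ℝ, 0 < v → v < u → K (u, v) = ENNReal.ofReal ((u - v) ^ (-α) * g v) := by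
    intro u v h1 h2
    rw [hK, Set.indicator_of_mem (show ((u,v) : ℝ × ℝ) ∈ S from ⟨h1, h2⟩)]
  have hKval0 : ∀ u v : ℝ, ¬(0 < v ∧ v < u) → K (u, v) = 0 := by
    intro u v h
    rw [hK, Set.indicator_of_notMem (fun hc : ((u,v) : ℝ × ℝ) ∈ S => h ⟨hc.1, hc.2⟩)]
  set W : ℝ → ℝ → ℝ≥0∞ := fun u v => ENNReal.ofReal (Real.exp (-(x*u))) * K (u, v) with hW
  have hWm : Measurable (Function.uncurry W) :=
    ((rsci_meas_exp2 x).ennreal_ofReal).mul hKm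
  set J : ℝ → ℝ≥0∞ := fun u => ∫⁻ v, K (u, v) with hJdef
  have hJm : Measurable J := hKm.lintegral_prod_right'
  have hJIoo : ∀ u : ℝ, J u = ∫⁻ v in Ioo 0 u, ENNReal.ofReal ((u - v) ^ (-α) * g v) := by
    intro u
    rw [show J u = ∫⁻ v, K (u, v) from rfl, ← lintegral_indicator measurableSet_Ioo]
    refine lintegral_congr (fun v => ?_)
    by_cases h : v ∈ Ioo 0 u
    · rw [Set.indicator_of_mem h, hKval u v h.1 h.2]
    · rw [Set.indicator_of_notMem h, hKval0 u v (fun hc => h ⟨hc.1, hc.2⟩)]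
  have hWJ : ∀ u : ℝ, (∫⁻ v, W u v) = ENNReal.ofReal (Real.exp (-(x*u))) * J u := by
    intro u
    exact lintegral_const_mul' _ _ ENNReal.ofReal_ne_top
  -- swap
  have hswap := lintegral_lintegral_swap (μ := volume.restrict (Ioi (0:ℝ))) (ν := volume)
      (f := W) hWm.aemeasurable
  -- inner u-integral
  have hinner : ∀ v : ℝ, (∫⁻ u in Ioi (0:ℝ), W u v)
      = (Ioi (0:ℝ)).indicator
          (fun v => ENNReal.ofReal Γc * ENNReal.ofReal (Real.exp (-(x*v)) * g v)) v := by
    intro v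
    by_cases hv : 0 < v
    · have h1 : ∀ u : ℝ, W u v = (Ioi v).indicator
          (fun u => ENNReal.ofReal (Real.exp (-(x*u)) * (u - v) ^ (-α))
            * ENNReal.ofReal (g v)) u := by
        intro u
        by_cases hu : v < u
        · rw [Set.indicator_of_mem (show u ∈ Ioi v from hu),
            show W u v = ENNReal.ofReal (Real.exp (-(x*u))) * K (u, v) from rfl,
            hKval u v hv hu,
            ← ENNReal.ofReal_mul (Real.exp_pos _).le, ← ENNReal.ofReal_mul
              (mul_nonneg (Real.exp_pos _).le (Real.rpow_nonneg (by linarith) _))]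
          congr 1; ring
        · rw [Set.indicator_of_notMem (show u ∉ Ioi v from hu),
            show W u v = ENNReal.ofReal (Real.exp (-(x*u))) * K (u, v) from rfl,
            hKval0 u v (fun hc => hu hc.2), mul_zero]
      have hsub2 : Ioi v ⊆ Ioi (0:ℝ) := fun y hy => lt_trans hv hy
      have hie : Ioi v ∩ Ioi (0:ℝ) = Ioi v := Set.inter_eq_left.mpr hsub2
      rw [lintegral_congr h1, lintegral_indicator measurableSet_Ioi,
        Measure.restrict_restrict measurableSet_Ioi, hie,
        lintegral_mul_const' _ _ ENNReal.ofReal_ne_top,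
        rsci_gammaV α hα₀ hα₁ x hx v,
        Set.indicator_of_mem (show v ∈ Ioi (0:ℝ) from hv)]
      rw [← ENNReal.ofReal_mul (mul_nonneg (Real.exp_pos _).le hΓcpos.le),
        ← ENNReal.ofReal_mul hΓcpos.le]
      congr 1; ring
    · have h1 : ∀ u : ℝ, W u v = 0 := by
        intro u
        rw [hW]
        simp only []
        rw [hK, Set.indicator_of_notMem (fun hc : (u,v) ∈ S => hv hc.1), mul_zero]
      rw [lintegral_congr h1, lintegral_zero,
        Set.indicator_of_notMem (show v ∉ Ioi (0:ℝ) from hv)]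
  -- total value
  have hnn2 : 0 ≤ᵐ[volume.restrict (Ioi (0:ℝ))] fun t => Real.exp (-(x*t)) * g t :=
    ae_of_all _ (fun t => mul_nonneg (Real.exp_pos _).le (hg0 t))
  have hT : ∫⁻ u in Ioi (0:ℝ), ENNReal.ofReal (Real.exp (-(x*u))) * J u
      = ENNReal.ofReal Γc * ENNReal.ofReal (Real.exp (-(z * x ^ α))) := by
    calc ∫⁻ u in Ioi (0:ℝ), ENNReal.ofReal (Real.exp (-(x*u))) * J u
        = ∫⁻ u in Ioi (0:ℝ), ∫⁻ v, W u v := by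
          exact lintegral_congr (fun u => (hWJ u).symm)
      _ = ∫⁻ v, ∫⁻ u in Ioi (0:ℝ), W u v := hswap
      _ = ∫⁻ v, (Ioi (0:ℝ)).indicator
            (fun v => ENNReal.ofReal Γc * ENNReal.ofReal (Real.exp (-(x*v)) * g v)) v :=
          lintegral_congr hinner
      _ = ∫⁻ v in Ioi (0:ℝ), ENNReal.ofReal Γc * ENNReal.ofReal (Real.exp (-(x*v)) * g v) :=
          lintegral_indicator measurableSet_Ioi _
      _ = ENNReal.ofReal Γc * ∫⁻ v in Ioi (0:ℝ), ENNReal.ofReal (Real.exp (-(x*v)) * g v) :=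
          lintegral_const_mul' _ _ ENNReal.ofReal_ne_top
      _ = ENNReal.ofReal Γc * ENNReal.ofReal (Real.exp (-(z * x ^ α))) := by
          rw [← ofReal_integral_eq_lintegral_ofReal (hgint x hx.le) hnn2, hgLT x hx.le]
  have hTne : ENNReal.ofReal Γc * ENNReal.ofReal (Real.exp (-(z * x ^ α))) ≠ ⊤ :=
    ENNReal.mul_ne_top ENNReal.ofReal_ne_top ENNReal.ofReal_ne_top
  have hmm : Measurable fun u => ENNReal.ofReal (Real.exp (-(x*u))) * J u :=
    ((rsci_meas_exp x).ennreal_ofReal).mul hJm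
  have hJfin : ∀ᵐ u ∂(volume.restrict (Ioi (0:ℝ))), J u < ⊤ := by
    have hae1 : ∀ᵐ u ∂(volume.restrict (Ioi (0:ℝ))),
        ENNReal.ofReal (Real.exp (-(x*u))) * J u < ⊤ :=
      ae_lt_top hmm (by rw [hT]; exact hTne)
    filter_upwards [hae1] with u hu
    by_contra h
    rw [not_lt, top_le_iff] at h
    rw [h, ENNReal.mul_top (by simpa using (Real.exp_pos (-(x*u))))] at hu
    exact absurd hu (lt_irrefl _)
  -- conv function
  set conv : ℝ → ℝ := fun u => ∫ v in Ioo (0:ℝ) u, (u - v) ^ (-α) * g v with hconvd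
  have hconv0 : ∀ u, 0 ≤ conv u := by
    intro u
    refine setIntegral_nonneg measurableSet_Ioo (fun v hv => ?_)
    exact mul_nonneg (Real.rpow_nonneg (by linarith [hv.2]) _) (hg0 v)
  have hconvm : StronglyMeasurable conv := by
    have hKr : StronglyMeasurable fun p : ℝ × ℝ =>
        S.indicator (fun p : ℝ × ℝ => (p.1 - p.2) ^ (-α) * g p.2) p :=
      (((rsci_meas_rpow2 α).mul (hgm.comp measurable_snd)).indicator hSm).stronglyMeasurable
    have h2 := hKr.integral_prod_right' (ν := volume)
    have h3 : conv = fun u => ∫ v, S.indicator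
        (fun p : ℝ × ℝ => (p.1 - p.2) ^ (-α) * g p.2) (u, v) := by
      funext u
      rw [show conv u = ∫ v in Ioo (0:ℝ) u, (u - v) ^ (-α) * g v from rfl,
        ← integral_indicator measurableSet_Ioo]
      refine integral_congr_ae (Eventually.of_forall (fun v => ?_))
      show (Ioo (0:ℝ) u).indicator (fun v => (u - v) ^ (-α) * g v) v
          = S.indicator (fun p : ℝ × ℝ => (p.1 - p.2) ^ (-α) * g p.2) (u, v)
      by_cases h : v ∈ Ioo 0 u
      · rw [Set.indicator_of_mem h,
          Set.indicator_of_mem (show ((u,v) : ℝ × ℝ) ∈ S from ⟨h.1, h.2⟩)]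
      · rw [Set.indicator_of_notMem h,
          Set.indicator_of_notMem (fun hc : ((u,v) : ℝ × ℝ) ∈ S => h ⟨hc.1, hc.2⟩)]
    rw [h3]
    exact h2
  -- a.e. link between conv and J
  have hlink : ∀ᵐ u ∂(volume.restrict (Ioi (0:ℝ))), ENNReal.ofReal (conv u) = J u := by
    filter_upwards [hJfin] with u hu
    have hmv : AEStronglyMeasurable (fun v => (u - v) ^ (-α) * g v)
        (volume.restrict (Ioo (0:ℝ) u)) := by
      exact ((rsci_meas_rpow' α u).mul hgm).aestronglyMeasurable
    have hnnv : 0 ≤ᵐ[volume.restrict (Ioo (0:ℝ) u)] fun v => (u - v) ^ (-α) * g v := by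
      filter_upwards [ae_restrict_mem measurableSet_Ioo] with v hv
      exact mul_nonneg (Real.rpow_nonneg (by linarith [hv.2]) _) (hg0 v)
    have hintv : IntegrableOn (fun v => (u - v) ^ (-α) * g v) (Ioo 0 u) := by
      refine ⟨hmv, (hasFiniteIntegral_iff_ofReal hnnv).2 ?_⟩
      rw [← hJIoo u]
      exact hu
    rw [show conv u = ∫ v in Ioo (0:ℝ) u, (u - v) ^ (-α) * g v from rfl,
      ofReal_integral_eq_lintegral_ofReal hintv hnnv, hJIoo u]
  -- conclude
  have hnn3 : 0 ≤ᵐ[volume.restrict (Ioi (0:ℝ))] fun u => Real.exp (-(x*u)) * conv u :=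
    ae_of_all _ (fun u => mul_nonneg (Real.exp_pos _).le (hconv0 u))
  have haes : AEStronglyMeasurable (fun u => Real.exp (-(x*u)) * conv u)
      (volume.restrict (Ioi (0:ℝ))) := by
    exact ((rsci_meas_exp x).stronglyMeasurable.mul hconvm).aestronglyMeasurable
  have hlt : ∫⁻ u in Ioi (0:ℝ), ENNReal.ofReal (Real.exp (-(x*u)) * conv u)
      = ENNReal.ofReal Γc * ENNReal.ofReal (Real.exp (-(z * x ^ α))) := by
    rw [← hT]
    refine lintegral_congr_ae ?_
    filter_upwards [hlink] with u hu
    rw [ENNReal.ofReal_mul (Real.exp_pos _).le, hu]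
  have hFI : HasFiniteIntegral (fun u => Real.exp (-(x*u)) * conv u)
      (volume.restrict (Ioi (0:ℝ))) := by
    rw [hasFiniteIntegral_iff_ofReal hnn3, hlt]
    exact hTne.lt_top
  refine ⟨⟨haes, hFI⟩, ?_⟩
  rw [integral_eq_lintegral_of_nonneg_ae hnn3 haes, hlt, ENNReal.toReal_mul,
    ENNReal.toReal_ofReal hΓcpos.le, ENNReal.toReal_ofReal (Real.exp_pos _).le]

lemma rsci_stepB (α z : ℝ) (hα₀ : 0 < α) (hα₁ : α < 1) (hz : 0 < z)
    (g : ℝ → ℝ) (hgm : Measurable g) (hg0 : ∀ t, 0 ≤ g t)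
    (hgint : ∀ x : ℝ, 0 ≤ x → IntegrableOn (fun t => Real.exp (-(x*t)) * g t) (Ioi 0))
    (hgLT : ∀ x : ℝ, 0 ≤ x →
      ∫ t in Ioi (0:ℝ), Real.exp (-(x*t)) * g t = Real.exp (-(z * x ^ α)))
    (x : ℝ) (hx : 0 < x) :
    IntegrableOn (fun u => Real.exp (-(x*u)) * (u * g u)) (Ioi 0) ∧
    ∫ u in Ioi (0:ℝ), Real.exp (-(x*u)) * (u * g u)
      = z * α * x ^ (α-1) * Real.exp (-(z * x ^ α)) := by
  have hball : ∀ y ∈ Metric.ball x (x/2), x/2 < y := by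
    intro y hy
    rw [Metric.mem_ball, Real.dist_eq, abs_sub_lt_iff] at hy
    linarith [hy.2]
  have hder := hasDerivAt_integral_of_dominated_loc_of_deriv_le
      (μ := volume.restrict (Ioi (0:ℝ)))
      (F := fun y u => Real.exp (-(y*u)) * g u)
      (F' := fun y u => -(u * (Real.exp (-(y*u)) * g u)))
      (x₀ := x) (bound := fun u => (4/x) * (Real.exp (-(x/4*u)) * g u))
      (s := Metric.ball x (x/2)) (Metric.ball_mem_nhds x (by positivity))
      (Eventually.of_forall (fun y =>
        ((rsci_meas_exp y).mul hgm).aestronglyMeasurable))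
      (hgint x hx.le)
      ((measurable_id.mul ((rsci_meas_exp x).mul hgm)).neg.aestronglyMeasurable)
      (by
        filter_upwards [ae_restrict_mem measurableSet_Ioi] with u hu y hy
        have hu0 : (0:ℝ) < u := hu
        have hy2 : x/2 < y := hball y hy
        have hsplit : Real.exp (-(x/2*u)) = Real.exp (-(x/4*u)) * Real.exp (-(x/4*u)) := by
          rw [← Real.exp_add]; congr 1; ring
        have hmono : Real.exp (-(y*u)) ≤ Real.exp (-(x/2*u)) := by
          apply Real.exp_le_exp.2
          nlinarith
        have haux : u * Real.exp (-(x/4*u)) ≤ 4/x := by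
          have := rsci_mul_exp_le (u := u) (x := x/4) (by positivity)
          calc u * Real.exp (-(x/4*u)) ≤ 1/(x/4) := this
            _ = 4/x := by rw [one_div_div]
        have hnn : (0:ℝ) ≤ Real.exp (-(x/4*u)) * g u :=
          mul_nonneg (Real.exp_pos _).le (hg0 u)
        rw [norm_neg, Real.norm_eq_abs,
          abs_of_nonneg (mul_nonneg hu0.le (mul_nonneg (Real.exp_pos _).le (hg0 u)))]
        calc u * (Real.exp (-(y*u)) * g u) ≤ u * (Real.exp (-(x/2*u)) * g u) := by
              apply mul_le_mul_of_nonneg_left _ hu0.le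
              exact mul_le_mul_of_nonneg_right hmono (hg0 u)
          _ = (u * Real.exp (-(x/4*u))) * (Real.exp (-(x/4*u)) * g u) := by
              rw [hsplit]; ring
          _ ≤ (4/x) * (Real.exp (-(x/4*u)) * g u) :=
              mul_le_mul_of_nonneg_right haux hnn)
      ((hgint (x/4) (by positivity)).const_mul _)
      (by
        refine ae_of_all _ (fun u y _ => ?_)
        have h1 : HasDerivAt (fun y : ℝ => -(y*u)) (-u) y := (hasDerivAt_mul_const u).neg
        have h2 := h1.exp
        have h3 := h2.mul_const (g u)
        convert h3 using 1
        · rfl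
        ring)
  -- identify the derivative
  have hEq : (fun y => ∫ u in Ioi (0:ℝ), Real.exp (-(y*u)) * g u)
      =ᶠ[nhds x] fun y => Real.exp (-(z * y ^ α)) := by
    filter_upwards [Ioi_mem_nhds hx] with y hy
    exact hgLT y (le_of_lt hy)
  have hder2 : HasDerivAt (fun y => Real.exp (-(z * y ^ α)))
      (∫ u in Ioi (0:ℝ), -(u * (Real.exp (-(x*u)) * g u))) x :=
    hder.2.congr_of_eventuallyEq hEq.symm
  have hexp : HasDerivAt (fun y => Real.exp (-(z * y ^ α)))
      (Real.exp (-(z * x ^ α)) * (-(z * (α * x ^ (α-1))))) x := by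
    have h1 : HasDerivAt (fun y : ℝ => y ^ α) (α * x ^ (α-1)) x :=
      Real.hasDerivAt_rpow_const (Or.inl hx.ne')
    exact ((h1.const_mul z).neg).exp
  have hval : ∫ u in Ioi (0:ℝ), -(u * (Real.exp (-(x*u)) * g u))
      = Real.exp (-(z * x ^ α)) * (-(z * (α * x ^ (α-1)))) := hder2.unique hexp
  constructor
  · refine (hder.1.neg).congr (Eventually.of_forall (fun u => ?_))
    simp only [Pi.neg_apply]
    ring
  · have e1 : ∫ u in Ioi (0:ℝ), Real.exp (-(x*u)) * (u * g u)
        = -∫ u in Ioi (0:ℝ), -(u * (Real.exp (-(x*u)) * g u)) := by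
      rw [← integral_neg]
      refine integral_congr_ae (Eventually.of_forall (fun u => ?_))
      simp only []
      ring
    rw [e1, hval]
    ring
lemma rsci_laplace_inj (q : ℝ → ℝ) (hq : IntegrableOn q (Ioi 0))
    (h0 : ∀ n : ℕ, ∫ u in Ioi (0:ℝ), Real.exp (-((n:ℝ) * u)) * q u = 0) :
    ∀ᵐ u ∂(volume.restrict (Ioi (0:ℝ))), q u = 0 := by
  -- integrability of monomial weights
  have hqm := hq.aestronglyMeasurable
  have hint : ∀ n : ℕ, IntegrableOn (fun u => (Real.exp (-u))^n * q u) (Ioi 0) := by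
    intro n
    refine Integrable.mono' hq.abs
      (((Real.continuous_exp.comp continuous_neg).pow n).aestronglyMeasurable.mul hqm) ?_
    filter_upwards [ae_restrict_mem measurableSet_Ioi] with u hu
    have h1 : Real.exp (-u) ≤ 1 := Real.exp_le_one_iff.2 (by simpa using (le_of_lt hu))
    have h2 : (0:ℝ) ≤ Real.exp (-u) := (Real.exp_pos _).le
    have h3 : (Real.exp (-u))^n ≤ 1 := pow_le_one₀ h2 h1
    have : |(Real.exp (-u))^n * q u| = (Real.exp (-u))^n * |q u| := by
      rw [abs_mul, abs_of_nonneg (pow_nonneg h2 n)]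
    rw [Real.norm_eq_abs, this]
    calc (Real.exp (-u))^n * |q u| ≤ 1 * |q u| :=
          mul_le_mul_of_nonneg_right h3 (abs_nonneg _)
      _ = |q u| := one_mul _
  have hmono : ∀ n : ℕ, ∫ u in Ioi (0:ℝ), (Real.exp (-u))^n * q u = 0 := by
    intro n
    have heq : ∫ u in Ioi (0:ℝ), (Real.exp (-u))^n * q u
        = ∫ u in Ioi (0:ℝ), Real.exp (-((n:ℝ) * u)) * q u := by
      refine integral_congr_ae (Eventually.of_forall (fun u => ?_))
      simp only []
      rw [← Real.exp_nat_mul, mul_neg]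
    rw [heq, h0 n]
  have hpoly : ∀ P : Polynomial ℝ, ∫ u in Ioi (0:ℝ), P.eval (Real.exp (-u)) * q u = 0 := by
    intro P
    have hev : ∀ u : ℝ, P.eval (Real.exp (-u)) * q u
        = ∑ i ∈ Finset.range (P.natDegree + 1), P.coeff i * ((Real.exp (-u))^i * q u) := by
      intro u
      rw [Polynomial.eval_eq_sum_range, Finset.sum_mul]
      exact Finset.sum_congr rfl (fun i _ => by ring)
    calc ∫ u in Ioi (0:ℝ), P.eval (Real.exp (-u)) * q u
        = ∫ u in Ioi (0:ℝ), ∑ i ∈ Finset.range (P.natDegree + 1),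
            P.coeff i * ((Real.exp (-u))^i * q u) := by
          exact integral_congr_ae (Eventually.of_forall (fun u => hev u))
      _ = ∑ i ∈ Finset.range (P.natDegree + 1),
            ∫ u in Ioi (0:ℝ), P.coeff i * ((Real.exp (-u))^i * q u) := by
          exact integral_finset_sum _ (fun i _ => (hint i).const_mul _)
      _ = 0 := by
          refine Finset.sum_eq_zero (fun i _ => ?_)
          rw [integral_const_mul, hmono i, mul_zero]
  -- indicator function
  set Q : ℝ → ℝ := (Ioi (0:ℝ)).indicator q with hQdef
  have hQint : Integrable Q := (integrable_indicator_iff measurableSet_Ioi).2 hq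
  have key : ∀ g : ℝ → ℝ, ContDiff ℝ ∞ g → HasCompactSupport g → tsupport g ⊆ Ioi 0 →
      ∫ u, g u • Q u = 0 := by
    intro g hg hgc hgs
    have h1 : ∫ u, g u • Q u = ∫ u in Ioi (0:ℝ), g u * q u := by
      rw [← integral_indicator measurableSet_Ioi]
      congr 1; funext u
      by_cases hu : u ∈ Ioi (0:ℝ) <;> simp [hQdef, Set.indicator_apply, hu]
    rw [h1]
    -- upper cutoff for g
    obtain ⟨R, hR⟩ : ∃ R : ℝ, ∀ y ∈ tsupport g, y ≤ R := hgc.isCompact.bddAbove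
    have hgzero : ∀ u : ℝ, R < u → g u = 0 := by
      intro u hu
      by_contra hne
      exact absurd (hR u (subset_tsupport g (by simpa using hne))) (not_le.2 hu)
    -- φ
    set φ : ℝ → ℝ := fun t => if 0 < t then g (-Real.log t) else 0 with hφdef
    have hφg : ∀ u : ℝ, 0 < u → φ (Real.exp (-u)) = g u := by
      intro u hu
      simp only [hφdef, if_pos (Real.exp_pos _), Real.log_exp, neg_neg]
    have hφ0 : ∀ t : ℝ, t < Real.exp (-R) → φ t = 0 := by
      intro t ht
      by_cases h : 0 < t
      · simp only [hφdef, if_pos h]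
        refine hgzero _ ?_
        have := Real.log_lt_log h ht
        rw [Real.log_exp] at this
        linarith
      · simp [hφdef, h]
    have hφcont : ContinuousOn φ (Icc 0 1) := by
      intro t ht
      rcases eq_or_lt_of_le ht.1 with h0 | h0
      · -- t = 0
        refine ContinuousWithinAt.congr_of_eventuallyEq (continuousWithinAt_const (b := 0)) ?_ ?_
        · filter_upwards [inter_mem_nhdsWithin (Icc (0:ℝ) 1) (Iio_mem_nhds
            (show t < Real.exp (-R) by rw [← h0]; exact Real.exp_pos _))] with s hs
          exact hφ0 s hs.2
        · exact hφ0 t (by rw [← h0]; exact Real.exp_pos _)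
      · -- 0 < t
        have hc : ContinuousAt φ t := by
          have hev : φ =ᶠ[nhds t] fun s => g (-Real.log s) := by
            filter_upwards [IsOpen.mem_nhds isOpen_Ioi h0] with s hs
            simp [hφdef, if_pos (show (0:ℝ) < s from hs)]
          refine ContinuousAt.congr ?_ hev.symm
          exact hg.continuous.continuousAt.comp
            ((Real.continuousAt_log (ne_of_gt h0)).neg)
        exact hc.continuousWithinAt
    -- bound constant for φ
    obtain ⟨Cφ, hCφ⟩ : ∃ C : ℝ, ∀ t ∈ Icc (0:ℝ) 1, |φ t| ≤ C := by
      obtain ⟨C, hC⟩ := (isCompact_Icc.image_of_continuousOn hφcont).isBounded.subset_ball 0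
      exact ⟨C, fun t ht => by
        have := hC (mem_image_of_mem φ ht)
        simpa [Real.dist_eq, abs_sub_comm] using (mem_ball_iff_norm.1 this).le⟩
    set I : ℝ := ∫ u in Ioi (0:ℝ), |q u| with hI
    have hI0 : 0 ≤ I := integral_nonneg (fun u => abs_nonneg _)
    have hgq_int : IntegrableOn (fun u => g u * q u) (Ioi 0) := by
      refine Integrable.mono' (hq.abs.const_mul (Cφ + 1))
        (hg.continuous.aestronglyMeasurable.mul hqm) ?_
      filter_upwards [ae_restrict_mem measurableSet_Ioi] with u hu
      have hmem : Real.exp (-u) ∈ Icc (0:ℝ) 1 :=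
        ⟨(Real.exp_pos _).le, Real.exp_le_one_iff.2 (by simpa using le_of_lt hu)⟩
      rw [Real.norm_eq_abs, abs_mul, ← hφg u hu]
      have := hCφ _ hmem
      have habs : (0:ℝ) ≤ |q u| := abs_nonneg _
      nlinarith [abs_nonneg (φ (Real.exp (-u)))]
    have hmain : ∀ ε : ℝ, 0 < ε → |∫ u in Ioi (0:ℝ), g u * q u| ≤ ε * (I + 1) := by
      intro ε hε
      obtain ⟨P, hP⟩ := exists_polynomial_near_of_continuousOn 0 1 φ hφcont ε hε
      have hPint : IntegrableOn (fun u => P.eval (Real.exp (-u)) * q u) (Ioi 0) := by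
        have hev2 : ∀ u : ℝ, P.eval (Real.exp (-u)) * q u
            = ∑ i ∈ Finset.range (P.natDegree + 1), P.coeff i * ((Real.exp (-u))^i * q u) := by
          intro u
          rw [Polynomial.eval_eq_sum_range, Finset.sum_mul]
          exact Finset.sum_congr rfl (fun i _ => by ring)
        have : IntegrableOn (fun u => ∑ i ∈ Finset.range (P.natDegree + 1),
            P.coeff i * ((Real.exp (-u))^i * q u)) (Ioi 0) :=
          integrable_finset_sum _ (fun i _ => (hint i).const_mul _)
        exact this.congr (Eventually.of_forall (fun u => (hev2 u).symm))
      have hsub : ∫ u in Ioi (0:ℝ), (g u - P.eval (Real.exp (-u))) * q u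
          = (∫ u in Ioi (0:ℝ), g u * q u) - ∫ u in Ioi (0:ℝ), P.eval (Real.exp (-u)) * q u := by
        rw [← integral_sub hgq_int hPint]
        congr 1; funext u; ring
      rw [hpoly P, sub_zero] at hsub
      rw [← hsub]
      have hb : ∀ᵐ u ∂(volume.restrict (Ioi (0:ℝ))),
          ‖(g u - P.eval (Real.exp (-u))) * q u‖ ≤ ε * |q u| := by
        filter_upwards [ae_restrict_mem measurableSet_Ioi] with u hu
        have hmem : Real.exp (-u) ∈ Icc (0:ℝ) 1 :=
          ⟨(Real.exp_pos _).le, Real.exp_le_one_iff.2 (by simpa using le_of_lt hu)⟩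
        rw [Real.norm_eq_abs, abs_mul, ← hφg u hu]
        have h4 := hP _ hmem
        have : |φ (Real.exp (-u)) - P.eval (Real.exp (-u))| ≤ ε := by
          rw [abs_sub_comm]; exact le_of_lt h4
        exact mul_le_mul_of_nonneg_right this (abs_nonneg _)
      calc |∫ u in Ioi (0:ℝ), (g u - P.eval (Real.exp (-u))) * q u|
          ≤ ∫ u in Ioi (0:ℝ), ε * |q u| :=
            norm_integral_le_of_norm_le ((hq.abs.const_mul ε)) hb
        _ = ε * I := by rw [integral_const_mul]
        _ ≤ ε * (I + 1) := by nlinarith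
    by_contra hA
    have hApos : 0 < |∫ u in Ioi (0:ℝ), g u * q u| := abs_pos.2 hA
    have h5 := hmain (|∫ u in Ioi (0:ℝ), g u * q u| / (2 * (I + 1))) (by positivity)
    have h6 : |∫ u in Ioi (0:ℝ), g u * q u| / (2 * (I + 1)) * (I + 1)
        = |∫ u in Ioi (0:ℝ), g u * q u| / 2 := by
      have : I + 1 ≠ 0 := by positivity
      field_simp
    rw [h6] at h5
    linarith
  have hae := IsOpen.ae_eq_zero_of_integral_contDiff_smul_eq_zero isOpen_Ioi
    (hQint.locallyIntegrable.locallyIntegrableOn _) key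
  rw [ae_restrict_iff' measurableSet_Ioi]
  filter_upwards [hae] with u hu hmem
  have := hu hmem
  rwa [hQdef, Set.indicator_of_mem hmem] at this

/-- The identity `{ρ_{1-α} ⋆ f_α(·|z)}(u) = (1/Γ(1-α)) ∫₀^u (u-v)^{-α} f_α(v|z) dv
= u f_α(u|z)/(zα)` for a.e. `u > 0`, where `f_α(·|z)` is the one-sided `α`-stable density. -/
theorem rho_stable_convolution_identity (α z : ℝ) (hα₀ : 0 < α) (hα₁ : α < 1) (hz : 0 < z)
    (f : ℝ → ℝ → ℝ)
    (hnonneg : ∀ w > (0:ℝ), ∀ t > (0:ℝ), 0 ≤ f t w)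
    (hLT : ∀ w > (0:ℝ), ∀ x ≥ (0:ℝ),
      ∫ t in Ioi (0:ℝ), Real.exp (-(x * t)) * f t w = Real.exp (-(w * x ^ α))) :
    ∀ᵐ u ∂(volume.restrict (Ioi (0:ℝ))),
      (1 / Real.Gamma (1 - α)) * ∫ v in Ioo (0:ℝ) u, (u - v) ^ (-α) * f v z
        = u * f u z / (z * α) := by
  have h1α : 0 < 1 - α := by linarith
  have hΓpos : 0 < Real.Gamma (1-α) := Real.Gamma_pos_of_pos h1α
  have hzα : (0:ℝ) < z * α := mul_pos hz hα₀
  have hfint : ∀ x : ℝ, 0 ≤ x → IntegrableOn (fun t => Real.exp (-(x*t)) * f t z) (Ioi 0) := by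
    intro x hx
    by_contra hni
    have h0 : ∫ t in Ioi (0:ℝ), Real.exp (-(x*t)) * f t z = 0 := integral_undef hni
    rw [hLT z hz x hx] at h0
    exact Real.exp_ne_zero _ h0
  have hfm : AEStronglyMeasurable (fun t => f t z) (volume.restrict (Ioi 0)) := by
    have h2 := (hfint 0 le_rfl).aestronglyMeasurable
    refine h2.congr (Eventually.of_forall (fun t => by simp))
  set g : ℝ → ℝ := fun t => max (hfm.mk (fun t => f t z) t) 0 with hgdef
  have hgm : Measurable g :=
    (hfm.stronglyMeasurable_mk.measurable).max measurable_const
  have hg0 : ∀ t, 0 ≤ g t := fun t => le_max_right _ _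
  have hfg : (fun t => f t z) =ᵐ[volume.restrict (Ioi (0:ℝ))] g := by
    filter_upwards [hfm.ae_eq_mk, ae_restrict_mem measurableSet_Ioi] with t h1 h2
    rw [hgdef]
    simp only []
    rw [← h1]
    exact (max_eq_left (hnonneg z hz t h2)).symm
  have hgint : ∀ x : ℝ, 0 ≤ x → IntegrableOn (fun t => Real.exp (-(x*t)) * g t) (Ioi 0) := by
    intro x hx
    refine (hfint x hx).congr ?_
    filter_upwards [hfg] with t ht
    rw [ht]
  have hgLT : ∀ x : ℝ, 0 ≤ x →
      ∫ t in Ioi (0:ℝ), Real.exp (-(x*t)) * g t = Real.exp (-(z * x ^ α)) := by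
    intro x hx
    rw [← hLT z hz x hx]
    refine integral_congr_ae ?_
    filter_upwards [hfg] with t ht
    rw [ht]
  set conv : ℝ → ℝ := fun u => ∫ v in Ioo (0:ℝ) u, (u - v) ^ (-α) * g v with hconvdef
  have hconvf : ∀ u : ℝ, (∫ v in Ioo (0:ℝ) u, (u - v) ^ (-α) * f v z) = conv u := by
    intro u
    refine integral_congr_ae ?_
    have hsub : ∀ᵐ v ∂(volume.restrict (Ioo (0:ℝ) u)), f v z = g v :=
      ae_restrict_of_ae_restrict_of_subset Ioo_subset_Ioi_self hfg
    filter_upwards [hsub] with v hv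
    rw [hv]
  have hA1 : ∀ x : ℝ, 0 < x →
      IntegrableOn (fun u => Real.exp (-(x*u)) * conv u) (Ioi 0) ∧
      ∫ u in Ioi (0:ℝ), Real.exp (-(x*u)) * conv u
        = Real.Gamma (1-α) * x ^ (α-1) * Real.exp (-(z * x ^ α)) := fun x hx =>
    rsci_stepA α z hα₀ hα₁ hz g hgm hg0 hgint hgLT x hx
  have hB1 : ∀ x : ℝ, 0 < x →
      IntegrableOn (fun u => Real.exp (-(x*u)) * (u * g u)) (Ioi 0) ∧
      ∫ u in Ioi (0:ℝ), Real.exp (-(x*u)) * (u * g u)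
        = z * α * x ^ (α-1) * Real.exp (-(z * x ^ α)) := fun x hx =>
    rsci_stepB α z hα₀ hα₁ hz g hgm hg0 hgint hgLT x hx
  set q : ℝ → ℝ :=
    fun u => Real.exp (-u) * ((1/Real.Gamma (1-α)) * conv u - u * g u / (z*α)) with hqdef
  have hqint : IntegrableOn q (Ioi 0) := by
    have e1 : IntegrableOn (fun u =>
        (1/Real.Gamma (1-α)) * (Real.exp (-((1:ℝ)*u)) * conv u)
          - (1/(z*α)) * (Real.exp (-((1:ℝ)*u)) * (u * g u))) (Ioi 0) :=
      ((hA1 1 one_pos).1.const_mul _).sub ((hB1 1 one_pos).1.const_mul _)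
    refine e1.congr (Eventually.of_forall (fun u => ?_))
    show (1/Real.Gamma (1-α)) * (Real.exp (-((1:ℝ)*u)) * conv u)
          - (1/(z*α)) * (Real.exp (-((1:ℝ)*u)) * (u * g u))
        = Real.exp (-u) * ((1/Real.Gamma (1-α)) * conv u - u * g u / (z*α))
    rw [one_mul]
    ring
  have hq0 : ∀ n : ℕ, ∫ u in Ioi (0:ℝ), Real.exp (-((n:ℝ)*u)) * q u = 0 := by
    intro n
    have hcpos : (0:ℝ) < (n:ℝ) + 1 := by positivity
    have e1 : ∀ u : ℝ, Real.exp (-((n:ℝ)*u)) * q u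
        = (1/Real.Gamma (1-α)) * (Real.exp (-(((n:ℝ)+1)*u)) * conv u)
          - (1/(z*α)) * (Real.exp (-(((n:ℝ)+1)*u)) * (u * g u)) := by
      intro u
      have h2 : Real.exp (-((n:ℝ)*u)) * Real.exp (-u) = Real.exp (-(((n:ℝ)+1)*u)) := by
        rw [← Real.exp_add]; congr 1; ring
      show Real.exp (-((n:ℝ)*u))
            * (Real.exp (-u) * ((1/Real.Gamma (1-α)) * conv u - u * g u / (z*α))) = _
      calc Real.exp (-((n:ℝ)*u))
            * (Real.exp (-u) * ((1/Real.Gamma (1-α)) * conv u - u * g u / (z*α)))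
          = (Real.exp (-((n:ℝ)*u)) * Real.exp (-u))
              * ((1/Real.Gamma (1-α)) * conv u - u * g u / (z*α)) := by ring
        _ = Real.exp (-(((n:ℝ)+1)*u))
              * ((1/Real.Gamma (1-α)) * conv u - u * g u / (z*α)) := by rw [h2]
        _ = (1/Real.Gamma (1-α)) * (Real.exp (-(((n:ℝ)+1)*u)) * conv u)
              - (1/(z*α)) * (Real.exp (-(((n:ℝ)+1)*u)) * (u * g u)) := by ring
    rw [integral_congr_ae (Eventually.of_forall e1),
      integral_sub ((hA1 _ hcpos).1.const_mul _) ((hB1 _ hcpos).1.const_mul _),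
      integral_const_mul, integral_const_mul, (hA1 _ hcpos).2, (hB1 _ hcpos).2]
    field_simp
    ring
  have hq := rsci_laplace_inj q hqint hq0
  filter_upwards [hq, hfg, ae_restrict_mem measurableSet_Ioi] with u hqu hfgu hu
  have hD : (1/Real.Gamma (1-α)) * conv u - u * g u / (z*α) = 0 := by
    have hqu' : Real.exp (-u) * ((1/Real.Gamma (1-α)) * conv u - u * g u / (z*α)) = 0 := hqu
    rcases mul_eq_zero.1 hqu' with h | h
    · exact absurd h (Real.exp_ne_zero _)
    · exact h
  rw [hconvf u, hfgu]
  linarith [hD]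
end

section
/- The three-parameter Mittag-Leffler (Prabhakar) function E^γ_{α,β}(w) = (1/Γ(γ)) Σ_{k=0}^∞ Γ(γ+k) w^k/(k! Γ(αk+β)) satisfies, for α,β,γ,λ>0 and s with s^α > λ (sufficiently large s), the Laplace transform identity ∫₀^∞ e^{-sx} x^{β-1} E^γ_{α,β}(-λ x^α) dx = s^{αγ-β}/(λ+s^α)^γ. -/
open MeasureTheory Real Set Filter Topology

lemma summable_gamma_pow {γ r : ℝ} (hγ : 0 < γ) (hr0 : 0 < r) (hr1 : r < 1) :
    Summable (fun k : ℕ => Real.Gamma (γ + k) * r ^ k / (Nat.factorial k)) := by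
  apply summable_of_ratio_test_tendsto_lt_one hr1
  · filter_upwards with k
    have h1 : (0:ℝ) < Real.Gamma (γ + k) := Real.Gamma_pos_of_pos (by positivity)
    have h2 : (0:ℝ) < (Nat.factorial k : ℝ) := by positivity
    positivity
  · have key : ∀ k : ℕ, ‖Real.Gamma (γ + (k+1 : ℕ)) * r ^ (k+1) / (Nat.factorial (k+1))‖ /
        ‖Real.Gamma (γ + k) * r ^ k / (Nat.factorial k)‖ = r * (1 + (γ - 1) / (k + 1)) := by
      intro k
      have h1 : (0:ℝ) < Real.Gamma (γ + k) := Real.Gamma_pos_of_pos (by positivity)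
      have hadd : Real.Gamma (γ + (k+1 : ℕ)) = (γ + k) * Real.Gamma (γ + k) := by
        have : (γ + (k+1 : ℕ) : ℝ) = (γ + k) + 1 := by push_cast; ring
        rw [this, Real.Gamma_add_one (by positivity)]
      have h2 : (0:ℝ) < Real.Gamma (γ + (k+1:ℕ)) := Real.Gamma_pos_of_pos (by positivity)
      have hf1 : (0:ℝ) < (Nat.factorial k : ℝ) := by positivity
      have hf2 : (Nat.factorial (k+1) : ℝ) = (k+1) * Nat.factorial k := by
        push_cast [Nat.factorial_succ]; ring
      rw [Real.norm_eq_abs, Real.norm_eq_abs, abs_of_pos (by positivity),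
        abs_of_pos (by positivity), hadd, hf2]
      have hk1 : (0:ℝ) < (k:ℝ) + 1 := by positivity
      field_simp
      ring
    rw [show (𝓝 r) = 𝓝 (r * (1 + 0)) by norm_num]
    refine Tendsto.congr (fun k => (key k).symm) (Tendsto.const_mul r (Tendsto.const_add 1 ?_))
    have : Tendsto (fun k : ℕ => ((k:ℝ) + 1)) atTop atTop :=
      tendsto_natCast_atTop_atTop.atTop_add tendsto_const_nhds
    exact Tendsto.div_atTop tendsto_const_nhds this

lemma integrableOn_rpow_mul_exp_neg_mul {a r : ℝ} (ha : 0 < a) (hr : 0 < r) :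
    IntegrableOn (fun x : ℝ => x ^ (a - 1) * Real.exp (-(r * x))) (Ioi (0:ℝ)) := by
  have h0 : IntegrableOn (fun x : ℝ => Real.exp (-x) * x ^ (a - 1)) (Ioi (0:ℝ)) :=
    Real.GammaIntegral_convergent ha
  have h1 : IntegrableOn (fun x : ℝ => Real.exp (-(r*x)) * (r*x) ^ (a - 1)) (Ioi (0:ℝ)) := by
    rw [integrableOn_Ioi_comp_mul_left_iff (fun x : ℝ => Real.exp (-x) * x ^ (a - 1)) 0 hr,
      mul_zero]
    exact h0
  have h2 : IntegrableOn (fun x : ℝ => r ^ (1-a) * (Real.exp (-(r*x)) * (r*x) ^ (a - 1)))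
      (Ioi (0:ℝ)) := h1.const_mul _
  refine h2.congr_fun (fun x hx => ?_) measurableSet_Ioi
  have hx : (0:ℝ) < x := hx
  beta_reduce; rw [Real.mul_rpow hr.le hx.le]
  rw [show r ^ (1-a) * (Real.exp (-(r*x)) * (r ^ (a-1) * x ^ (a-1)))
      = (r ^ (1-a) * r ^ (a-1)) * (x ^ (a-1) * Real.exp (-(r*x))) by ring,
    ← Real.rpow_add hr]
  norm_num

lemma exp_tsum (y : ℝ) : (∑' k : ℕ, y ^ k / (Nat.factorial k)) = Real.exp y := by
  rw [Real.exp_eq_exp_ℝ, NormedSpace.exp_eq_tsum ℝ]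
  exact tsum_congr fun k => by rw [smul_eq_mul, inv_mul_eq_div]

lemma hasSum_binom {γ t : ℝ} (hγ : 0 < γ) (ht0 : t ≠ 0) (ht : |t| < 1) :
    HasSum (fun k : ℕ => Real.Gamma (γ + k) * t ^ k / (Real.Gamma γ * (Nat.factorial k)))
      ((1 - t) ^ (-γ : ℝ)) := by
  have hΓγ : 0 < Real.Gamma γ := Real.Gamma_pos_of_pos hγ
  have habs : 0 < |t| := abs_pos.2 ht0
  have hsum0 := summable_gamma_pow hγ habs ht
  have ht1 : 0 < 1 - t := by
    have := (abs_lt.1 ht).2; linarith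
  have hnorm : ∀ k : ℕ, ‖Real.Gamma (γ + k) * t ^ k / (Real.Gamma γ * (Nat.factorial k))‖
      = Real.Gamma (γ + k) * |t| ^ k / (Nat.factorial k) / Real.Gamma γ := by
    intro k
    have h1 : 0 < Real.Gamma (γ + k) := Real.Gamma_pos_of_pos (by positivity)
    rw [Real.norm_eq_abs, abs_div, abs_mul, abs_pow, abs_of_pos h1, abs_mul,
      abs_of_pos hΓγ, Nat.abs_cast]
    ring
  have hS : Summable (fun k : ℕ => Real.Gamma (γ + k) * t ^ k /
      (Real.Gamma γ * (Nat.factorial k))) := by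
    apply Summable.of_norm
    exact ((hsum0.div_const (Real.Gamma γ)).congr fun k => (hnorm k).symm)
  rw [Summable.hasSum_iff hS]
  set F : ℕ → ℝ → ℝ := fun k u =>
    (Real.exp (-u) * u ^ (γ + k - 1)) * (t ^ k / (Real.Gamma γ * (Nat.factorial k))) with hF
  have hterm : ∀ k : ℕ, Real.Gamma (γ + k) * t ^ k / (Real.Gamma γ * (Nat.factorial k))
      = ∫ u in Ioi (0:ℝ), F k u := by
    intro k
    rw [hF, MeasureTheory.integral_mul_const,
      ← Real.Gamma_eq_integral (by positivity : (0:ℝ) < γ + k)]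
    ring
  have hint : ∀ k : ℕ, Integrable (F k) (volume.restrict (Ioi (0:ℝ))) := fun k =>
    (Real.GammaIntegral_convergent (by positivity : (0:ℝ) < γ + k)).mul_const _
  have hnormint : ∀ k : ℕ, (∫ u in Ioi (0:ℝ), ‖F k u‖)
      = Real.Gamma (γ + k) * |t| ^ k / (Nat.factorial k) / Real.Gamma γ := by
    intro k
    have : ∀ u ∈ Ioi (0:ℝ), ‖F k u‖
        = (Real.exp (-u) * u ^ (γ + k - 1)) * (|t| ^ k / (Real.Gamma γ * (Nat.factorial k))) := by
      intro u hu
      have hu : (0:ℝ) < u := hu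
      have h2 : (0:ℝ) < u ^ (γ + k - 1) := Real.rpow_pos_of_pos hu _
      have h3 : (0:ℝ) < (Nat.factorial k : ℝ) := by positivity
      rw [Real.norm_eq_abs, abs_mul, abs_of_pos (by positivity), abs_div, abs_pow,
        abs_mul, abs_of_pos hΓγ, Nat.abs_cast]
    rw [setIntegral_congr_fun measurableSet_Ioi this, MeasureTheory.integral_mul_const,
      ← Real.Gamma_eq_integral (by positivity : (0:ℝ) < γ + k)]
    ring
  have hsumnorm : Summable fun k : ℕ => ∫ u in Ioi (0:ℝ), ‖F k u‖ :=
    (hsum0.div_const (Real.Gamma γ)).congr fun k => (hnormint k).symm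
  rw [tsum_congr hterm, MeasureTheory.integral_tsum_of_summable_integral_norm hint hsumnorm]
  have hpoint : ∀ u ∈ Ioi (0:ℝ), (∑' k : ℕ, F k u)
      = (u ^ (γ - 1) * Real.exp (-((1 - t) * u))) * (Real.Gamma γ)⁻¹ := by
    intro u hu
    have hu : (0:ℝ) < u := hu
    have h1 : ∀ k : ℕ, F k u
        = ((Real.exp (-u) * u ^ (γ - 1)) * (Real.Gamma γ)⁻¹) *
          ((u * t) ^ k / (Nat.factorial k)) := by
      intro k
      have h2 : u ^ (γ + (k:ℝ) - 1) = u ^ (γ - 1) * u ^ k := by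
        rw [← Real.rpow_natCast u k, ← Real.rpow_add hu]; ring_nf
      have h3 : (0:ℝ) < (Nat.factorial k : ℝ) := by positivity
      rw [hF]; dsimp only
      rw [h2, mul_pow]
      field_simp
    rw [tsum_congr h1, tsum_mul_left, exp_tsum,
      show -((1 - t) * u) = -u + u * t by ring, Real.exp_add]
    ring
  rw [setIntegral_congr_fun measurableSet_Ioi hpoint, MeasureTheory.integral_mul_const]
  have : (∫ u in Ioi (0:ℝ), u ^ (γ - 1) * Real.exp (-((1 - t) * u)))
      = (1 / (1 - t)) ^ γ * Real.Gamma γ :=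
    Real.integral_rpow_mul_exp_neg_mul_Ioi hγ ht1
  rw [this, one_div, Real.inv_rpow ht1.le, Real.rpow_neg ht1.le]
  field_simp

/-- The three-parameter Mittag-Leffler (Prabhakar) function
`E^γ_{α,β}(w) = (1/Γ(γ)) Σ_{k≥0} Γ(γ+k) w^k / (k! Γ(αk+β))`. -/
noncomputable def prabhakar (α β γ : ℝ) (w : ℝ) : ℝ :=
  ∑' k : ℕ, Real.Gamma (γ + k) * w ^ k / (Real.Gamma γ * (Nat.factorial k) * Real.Gamma (α * k + β))

/-- Laplace transform of the Prabhakar function: for `α, β, γ, λ > 0` and `s` with `s^α > λ`,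
`∫₀^∞ e^{-sx} x^{β-1} E^γ_{α,β}(-λ x^α) dx = s^{αγ-β}/(λ+s^α)^γ`. -/
theorem prabhakar_laplace (α β γ lam s : ℝ) (hα : 0 < α) (hβ : 0 < β) (hγ : 0 < γ)
    (hlam : 0 < lam) (hs : 0 < s) (hlarge : lam < s ^ α) :
    ∫ x in Ioi (0:ℝ), Real.exp (-(s * x)) * x ^ (β - 1) * prabhakar α β γ (-(lam * x ^ α))
      = s ^ (α * γ - β) / (lam + s ^ α) ^ γ := by
  have hsα : 0 < s ^ α := Real.rpow_pos_of_pos hs α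
  set t : ℝ := lam / s ^ α with hT
  have ht0 : 0 < t := div_pos hlam hsα
  have ht1 : t < 1 := (div_lt_one hsα).2 hlarge
  have hΓγ : 0 < Real.Gamma γ := Real.Gamma_pos_of_pos hγ
  set g : ℕ → ℝ → ℝ := fun k x => Real.exp (-(s * x)) * x ^ (β - 1) *
    (Real.Gamma (γ + k) * (-(lam * x ^ α)) ^ k /
      (Real.Gamma γ * (Nat.factorial k) * Real.Gamma (α * k + β))) with hg
  have hrw : ∀ x : ℝ, Real.exp (-(s * x)) * x ^ (β - 1) * prabhakar α β γ (-(lam * x ^ α))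
      = ∑' k : ℕ, g k x := by
    intro x
    rw [prabhakar, hg]
    exact (tsum_mul_left).symm
  simp only [hrw]
  -- pointwise description of g on Ioi 0
  have hEq : ∀ k : ℕ, ∀ x ∈ Ioi (0:ℝ), g k x
      = (x ^ (α * (k:ℝ) + β - 1) * Real.exp (-(s * x))) *
        (Real.Gamma (γ + k) * (-lam) ^ k /
          (Real.Gamma γ * (Nat.factorial k) * Real.Gamma (α * k + β))) := by
    intro k x hx
    have hx : (0:ℝ) < x := hx
    have h1 : (-(lam * x ^ α)) ^ k = (-lam) ^ k * x ^ (α * (k:ℝ)) := by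
      rw [show -(lam * x ^ α) = (-lam) * x ^ α by ring, mul_pow,
        Real.rpow_mul hx.le, Real.rpow_natCast]
    have h2 : x ^ (β - 1) * x ^ (α * (k:ℝ)) = x ^ (α * (k:ℝ) + β - 1) := by
      rw [← Real.rpow_add hx]; ring_nf
    rw [hg]; dsimp only
    rw [h1, ← h2]
    ring
  have hint : ∀ k : ℕ, Integrable (g k) (volume.restrict (Ioi (0:ℝ))) := by
    intro k
    have base : IntegrableOn
        (fun x : ℝ => x ^ (α * (k:ℝ) + β - 1) * Real.exp (-(s * x))) (Ioi (0:ℝ)) :=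
      integrableOn_rpow_mul_exp_neg_mul (by positivity) hs
    have base2 : IntegrableOn
        (fun x : ℝ => (x ^ (α * (k:ℝ) + β - 1) * Real.exp (-(s * x))) *
          (Real.Gamma (γ + k) * (-lam) ^ k /
            (Real.Gamma γ * (Nat.factorial k) * Real.Gamma (α * k + β)))) (Ioi (0:ℝ)) :=
      base.mul_const _
    exact base2.congr_fun (fun x hx => (hEq k x hx).symm) measurableSet_Ioi
  have hΓk : ∀ k : ℕ, 0 < Real.Gamma (α * (k:ℝ) + β) :=
    fun k => Real.Gamma_pos_of_pos (by positivity)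
  have e1 : ∀ k : ℕ, ((1:ℝ)/s) ^ (α * (k:ℝ) + β) = ((s^α)⁻¹) ^ k * (s^β)⁻¹ := by
    intro k
    rw [one_div, Real.rpow_add (inv_pos.2 hs), Real.rpow_mul (inv_pos.2 hs).le,
      Real.rpow_natCast, Real.inv_rpow hs.le, Real.inv_rpow hs.le]
  have hCk : ∀ k : ℕ, (∫ x in Ioi (0:ℝ), g k x)
      = (Real.Gamma (γ + k) * (-t) ^ k / (Real.Gamma γ * (Nat.factorial k))) * (s^β)⁻¹ := by
    intro k
    rw [setIntegral_congr_fun measurableSet_Ioi (hEq k), MeasureTheory.integral_mul_const,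
      Real.integral_rpow_mul_exp_neg_mul_Ioi (by positivity) hs, e1 k]
    have e2 : (-t) ^ k = (-lam) ^ k * ((s^α)⁻¹) ^ k := by
      rw [← mul_pow]
      congr 1
      rw [hT, div_eq_mul_inv]; ring
    rw [e2]
    have h3 : (0:ℝ) < (Nat.factorial k : ℝ) := by positivity
    field_simp
  have hNk : ∀ k : ℕ, (∫ x in Ioi (0:ℝ), ‖g k x‖)
      = (Real.Gamma (γ + k) * t ^ k / (Nat.factorial k)) / Real.Gamma γ * (s^β)⁻¹ := by
    intro k
    have hEqN : ∀ x ∈ Ioi (0:ℝ), ‖g k x‖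
        = (x ^ (α * (k:ℝ) + β - 1) * Real.exp (-(s * x))) *
          (Real.Gamma (γ + k) * lam ^ k /
            (Real.Gamma γ * (Nat.factorial k) * Real.Gamma (α * k + β))) := by
      intro x hx
      have hx' : (0:ℝ) < x := hx
      rw [hEq k x hx, Real.norm_eq_abs, abs_mul]
      have hp1 : (0:ℝ) < x ^ (α * (k:ℝ) + β - 1) * Real.exp (-(s * x)) := by
        have := Real.rpow_pos_of_pos hx' (α * (k:ℝ) + β - 1); positivity
      have h1 : 0 < Real.Gamma (γ + k) := Real.Gamma_pos_of_pos (by positivity)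
      have h3 : (0:ℝ) < (Nat.factorial k : ℝ) := by positivity
      rw [abs_of_pos hp1, abs_div, abs_mul, abs_pow, abs_neg, abs_of_pos h1,
        abs_of_pos hlam, abs_mul, abs_mul, abs_of_pos hΓγ, Nat.abs_cast,
        abs_of_pos (hΓk k)]
    rw [setIntegral_congr_fun measurableSet_Ioi hEqN, MeasureTheory.integral_mul_const,
      Real.integral_rpow_mul_exp_neg_mul_Ioi (by positivity) hs, e1 k]
    have e2 : t ^ k = lam ^ k * ((s^α)⁻¹) ^ k := by
      rw [hT, div_eq_mul_inv, mul_pow]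
    rw [e2]
    have h3 : (0:ℝ) < (Nat.factorial k : ℝ) := by positivity
    field_simp
  have hbin := hasSum_binom hγ (t := -t) (neg_ne_zero.2 ht0.ne') (by rw [abs_neg, abs_of_pos ht0]; exact ht1)
  have hsumnorm : Summable fun k : ℕ => ∫ x in Ioi (0:ℝ), ‖g k x‖ := by
    refine Summable.congr ?_ fun k => (hNk k).symm
    exact (((summable_gamma_pow hγ ht0 ht1).div_const (Real.Gamma γ)).mul_right _)
  rw [← MeasureTheory.integral_tsum_of_summable_integral_norm hint hsumnorm,
    tsum_congr hCk, tsum_mul_right, hbin.tsum_eq]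
  -- final algebra
  have hpos : (0:ℝ) < lam + s ^ α := by positivity
  have h1mt : (1:ℝ) - -t = (lam + s ^ α) / s ^ α := by
    rw [hT]; field_simp; ring
  rw [h1mt, Real.rpow_neg (by positivity), Real.div_rpow hpos.le hsα.le,
    ← Real.rpow_mul hs.le, Real.rpow_sub hs]
  rw [inv_div]
  ring
end

section
/- Let 0<α<1 and let S be a positive random variable with density f_α (Laplace transform e^{-x^α}). Then M = S^{-α} has Laplace transform E[e^{-xM}] = E_α(-x) = Σ_{k=0}^∞ (-x)^k/Γ(αk+1) for all x ≥ 0. -/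
open MeasureTheory Real Set Filter
open scoped ENNReal NNReal

private lemma my_measurable_rpow_const (c : ℝ) : Measurable fun x : ℝ => x ^ c := by
  have h : (fun x : ℝ => x ^ c) = fun x =>
      if x < 0 then Real.exp (Real.log x * c) * Real.cos (c * π)
      else if x = 0 then (if c = 0 then 1 else 0) else Real.exp (Real.log x * c) := by
    funext x
    rcases lt_trichotomy x 0 with h | h | h
    · rw [if_pos h, Real.rpow_def_of_neg h]
    · subst h
      rw [if_neg (lt_irrefl _), if_pos rfl]
      by_cases hc : c = 0 <;> simp [hc, Real.zero_rpow]
    · rw [if_neg (not_lt.2 h.le), if_neg h.ne', Real.rpow_def_of_pos h]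
  rw [h]
  exact Measurable.ite measurableSet_Iio
    ((Real.measurable_log.mul measurable_const).exp.mul measurable_const)
    (Measurable.ite (measurableSet_singleton 0) measurable_const
      (Real.measurable_log.mul measurable_const).exp)

private lemma gamma_ratio (α t : ℝ) (hα₀ : 0 < α) (hα₁ : α < 1) (ht : 0 < t) :
    Real.Gamma (t + 1) ≤ Real.Gamma (t + α) * (t + α) ^ (1 - α) := by
  have htα : 0 < t + α := by linarith
  have h1 : (0:ℝ) < t + α + 1 := by linarith
  have hconv := Real.convexOn_log_Gamma.2 (mem_Ioi.2 htα) (mem_Ioi.2 h1)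
    hα₀.le (by linarith : (0:ℝ) ≤ 1 - α) (by ring)
  have heq : α • (t + α) + (1 - α) • (t + α + 1) = t + 1 := by
    simp only [smul_eq_mul]; ring
  rw [heq] at hconv
  have hGadd : Real.Gamma (t + α + 1) = (t + α) * Real.Gamma (t + α) :=
    Real.Gamma_add_one htα.ne'
  have hGpos : 0 < Real.Gamma (t + α) := Real.Gamma_pos_of_pos htα
  have hGpos1 : 0 < Real.Gamma (t + 1) := Real.Gamma_pos_of_pos (by linarith)
  simp only [Function.comp_apply, smul_eq_mul] at hconv
  rw [hGadd, Real.log_mul htα.ne' hGpos.ne'] at hconv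
  have hlog : Real.log (Real.Gamma (t + 1)) ≤
      Real.log (Real.Gamma (t + α)) + (1 - α) * Real.log (t + α) := by nlinarith
  calc Real.Gamma (t + 1) = Real.exp (Real.log (Real.Gamma (t + 1))) := (Real.exp_log hGpos1).symm
    _ ≤ Real.exp (Real.log (Real.Gamma (t + α)) + (1 - α) * Real.log (t + α)) :=
        Real.exp_le_exp.2 hlog
    _ = Real.Gamma (t + α) * (t + α) ^ (1 - α) := by
        rw [Real.exp_add, Real.exp_log hGpos, Real.rpow_def_of_pos htα, mul_comm (Real.log _)]

private lemma gamma_lower (α t : ℝ) (hα₀ : 0 < α) (hα₁ : α < 1) (ht : 1 ≤ t) :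
    Real.Gamma t * t ^ α ≤ 2 * Real.Gamma (t + α) := by
  have ht0 : (0:ℝ) < t := by linarith
  have hr := gamma_ratio α t hα₀ hα₁ ht0
  have hG1 : Real.Gamma (t + 1) = t * Real.Gamma t := Real.Gamma_add_one ht0.ne'
  have hA : (t + α) ^ (1 - α) ≤ 2 * t ^ (1 - α) := by
    calc (t + α) ^ (1 - α) ≤ (2 * t) ^ (1 - α) :=
          Real.rpow_le_rpow (by linarith) (by linarith) (by linarith)
      _ = 2 ^ (1 - α) * t ^ (1 - α) := Real.mul_rpow (by norm_num) ht0.le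
      _ ≤ 2 * t ^ (1 - α) := by
          have h2 : (2:ℝ) ^ (1 - α) ≤ 2 ^ (1:ℝ) :=
            Real.rpow_le_rpow_of_exponent_le one_le_two (by linarith)
          rw [Real.rpow_one] at h2
          have := Real.rpow_nonneg ht0.le (1 - α)
          nlinarith
  have hB : t ^ α * t ^ (1 - α) = t := by
    rw [← Real.rpow_add ht0]; norm_num
  have hBpos : (0:ℝ) < t ^ (1 - α) := Real.rpow_pos_of_pos ht0 _
  have hGpos : 0 < Real.Gamma (t + α) := Real.Gamma_pos_of_pos (by linarith)
  have hGtpos : 0 < Real.Gamma t := Real.Gamma_pos_of_pos ht0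
  nlinarith [mul_le_mul_of_nonneg_left hA hGpos.le]

private lemma summable_ml (α x : ℝ) (hα₀ : 0 < α) (hα₁ : α < 1) (hx : 0 ≤ x) :
    Summable (fun k : ℕ => x ^ k / Real.Gamma (α * k + 1)) := by
  apply summable_of_ratio_norm_eventually_le (r := 1/2) (by norm_num)
  have hev : ∀ᶠ k : ℕ in atTop, (α * k + 1) ^ α ≥ 4 * x := by
    have htend : Tendsto (fun k : ℕ => (α * k + 1) ^ α) atTop atTop := by
      apply (tendsto_rpow_atTop hα₀).comp
      exact tendsto_atTop_add_const_right _ _ ((tendsto_natCast_atTop_atTop).const_mul_atTop hα₀)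
    exact htend.eventually_ge_atTop _
  filter_upwards [hev] with k hk
  set t := α * k + 1 with hts
  have ht1 : 1 ≤ t := by
    have : (0:ℝ) ≤ α * k := by positivity
    simp [hts]; linarith
  have ht0 : (0:ℝ) < t := by linarith
  have hGt : 0 < Real.Gamma t := Real.Gamma_pos_of_pos ht0
  have hGt' : 0 < Real.Gamma (t + α) := Real.Gamma_pos_of_pos (by linarith)
  have hlow := gamma_lower α t hα₀ hα₁ ht1
  have hxk : (0:ℝ) ≤ x ^ k := by positivity
  have harg : α * (k + 1 : ℕ) + 1 = t + α := by push_cast [hts]; ring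
  rw [harg]
  rw [Real.norm_of_nonneg (by positivity), Real.norm_of_nonneg (by positivity)]
  rw [pow_succ, div_le_iff₀ hGt', mul_comm (1/2 : ℝ), mul_assoc, div_mul_eq_mul_div,
    div_mul_eq_mul_div, le_div_iff₀ hGt]
  nlinarith [mul_le_mul_of_nonneg_left hk hxk, mul_le_mul_of_nonneg_left hlow hxk,
    mul_nonneg hxk hx, Real.rpow_pos_of_pos ht0 α, mul_le_mul_of_nonneg_right hk (mul_nonneg hxk hGt.le)]
private lemma moment_succ (α : ℝ) (hα₀ : 0 < α) (hα₁ : α < 1) (g : ℝ → ℝ) (hg : Measurable g)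
    (hg0 : ∀ u, 0 ≤ g u) (hgint : IntegrableOn g (Ioi 0))
    (hLT : ∀ x ≥ (0:ℝ), ∫ u in Ioi 0, Real.exp (-(x*u)) * g u = Real.exp (-(x^α)))
    (k : ℕ) :
    ∫⁻ u in Ioi (0:ℝ), ENNReal.ofReal (u ^ (-(α*(k+1 : ℕ))) * g u)
      = ENNReal.ofReal ((Nat.factorial (k+1) : ℝ) / Real.Gamma (α*(k+1 : ℕ)+1)) := by
  have hn1 : (1:ℝ) ≤ ((k+1 : ℕ):ℝ) := by exact_mod_cast Nat.one_le_iff_ne_zero.2 (by omega)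
  set p : ℝ := α * (k+1 : ℕ) with hp_def
  have hp : 0 < p := by
    have : (0:ℝ) < ((k+1:ℕ):ℝ) := by linarith
    exact mul_pos hα₀ this
  have hp1 : -1 < p - 1 := by linarith
  -- inner u-integral for fixed x > 0
  have hinner_u : ∀ x : ℝ, 0 < x →
      ∫⁻ u in Ioi (0:ℝ), ENNReal.ofReal (Real.exp (-(x*u)) * g u)
        = ENNReal.ofReal (Real.exp (-(x^α))) := by
    intro x hx
    have hint : IntegrableOn (fun u => Real.exp (-(x*u)) * g u) (Ioi 0) := by
      apply Integrable.mono' hgint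
      · exact ((measurable_const.mul measurable_id).neg.exp.mul hg).aestronglyMeasurable
      · filter_upwards [ae_restrict_mem measurableSet_Ioi] with u hu
        rw [Real.norm_of_nonneg (mul_nonneg (Real.exp_nonneg _) (hg0 u))]
        have : Real.exp (-(x*u)) ≤ 1 := Real.exp_le_one_iff.2 (by nlinarith [mem_Ioi.1 hu])
        nlinarith [hg0 u]
    rw [← ofReal_integral_eq_lintegral_ofReal hint ?_, hLT x hx.le]
    filter_upwards with u using mul_nonneg (Real.exp_nonneg _) (hg0 u)
  -- inner x-integral for fixed u > 0
  have hinner_x : ∀ u : ℝ, 0 < u →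
      ∫⁻ x in Ioi (0:ℝ), ENNReal.ofReal (x ^ (p-1) * Real.exp (-(x*u)))
        = ENNReal.ofReal (Real.Gamma p * u ^ (-p)) := by
    intro u hu
    have hcongr : ∀ x ∈ Ioi (0:ℝ),
        x ^ (p-1) * Real.exp (-u * x ^ (1:ℝ)) = x ^ (p-1) * Real.exp (-(x*u)) := by
      intro x hx
      rw [Real.rpow_one]; ring_nf
    have hint : IntegrableOn (fun x => x ^ (p-1) * Real.exp (-(x*u))) (Ioi 0) := by
      have := integrableOn_rpow_mul_exp_neg_mul_rpow hp1 zero_lt_one hu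
      exact this.congr_fun hcongr measurableSet_Ioi
    have hval : ∫ x in Ioi (0:ℝ), x ^ (p-1) * Real.exp (-(x*u))
        = Real.Gamma p * u ^ (-p) := by
      rw [← setIntegral_congr_fun measurableSet_Ioi hcongr,
        integral_rpow_mul_exp_neg_mul_rpow zero_lt_one hp1 hu]
      rw [show p - 1 + 1 = p by ring, div_one]
      ring
    rw [← ofReal_integral_eq_lintegral_ofReal hint ?_, hval]
    filter_upwards [ae_restrict_mem measurableSet_Ioi] with x hx
    exact mul_nonneg (Real.rpow_nonneg (le_of_lt hx) _) (Real.exp_nonneg _)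
  -- x-integral of x^(p-1) exp(-x^α)
  have hX : ∫⁻ x in Ioi (0:ℝ), ENNReal.ofReal (x ^ (p-1) * Real.exp (-(x^α)))
      = ENNReal.ofReal ((1/α) * (Nat.factorial k : ℝ)) := by
    have hcongr : ∀ x ∈ Ioi (0:ℝ),
        x ^ (α-1) • (Real.exp (-(x^α)) * (x^α) ^ (((k+1:ℕ):ℝ) - 1))
          = x ^ (p-1) * Real.exp (-(x^α)) := by
      intro x hx
      have hx0 : (0:ℝ) < x := hx
      have h1 : (x^α) ^ ((((k+1):ℕ):ℝ)-1) = x ^ (α*((((k+1):ℕ):ℝ)-1)) :=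
        (Real.rpow_mul hx0.le _ _).symm
      have h2 : x^(α-1) * x^(α*((((k+1):ℕ):ℝ)-1)) = x^(p-1) := by
        rw [← Real.rpow_add hx0]; congr 1; rw [hp_def]; push_cast; ring
      rw [smul_eq_mul, h1, show ∀ a b c : ℝ, a * (c * b) = a * b * c from fun a b c => by ring, h2]
    have hint : IntegrableOn (fun x => x ^ (p-1) * Real.exp (-(x^α))) (Ioi 0) := by
      have hiff := integrableOn_Ioi_comp_rpow_iff'
        (fun y => Real.exp (-y) * y ^ ((((k+1):ℕ):ℝ) - 1)) (ne_of_gt hα₀)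
      have hRHS : IntegrableOn (fun y => Real.exp (-y) * y ^ ((((k+1):ℕ):ℝ) - 1)) (Ioi 0) :=
        Real.GammaIntegral_convergent (by linarith : (0:ℝ) < (((k+1):ℕ):ℝ))
      exact ((hiff.2 hRHS).congr_fun hcongr measurableSet_Ioi)
    have hval : ∫ x in Ioi (0:ℝ), x ^ (p-1) * Real.exp (-(x^α))
        = (1/α) * (Nat.factorial k : ℝ) := by
      rw [integral_rpow_mul_exp_neg_rpow hα₀ hp1]
      rw [show (p - 1 + 1)/α = (((k+1):ℕ):ℝ) by rw [hp_def]; field_simp; ring]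
      rw [show ((((k+1):ℕ)):ℝ) = (k:ℝ)+1 by push_cast; ring, Real.Gamma_nat_eq_factorial]
    rw [← ofReal_integral_eq_lintegral_ofReal hint ?_, hval]
    filter_upwards [ae_restrict_mem measurableSet_Ioi] with x hx
    exact mul_nonneg (Real.rpow_nonneg (le_of_lt hx) _) (Real.exp_nonneg _)
  -- Tonelli
  have hmeas : Measurable fun q : ℝ × ℝ =>
      ENNReal.ofReal (q.1 ^ (p-1) * Real.exp (-(q.1 * q.2)) * g q.2) := by
    apply Measurable.ennreal_ofReal
    exact (((my_measurable_rpow_const (p-1)).comp measurable_fst).mul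
      ((measurable_fst.mul measurable_snd).neg.exp)).mul (hg.comp measurable_snd)
  have hswap := lintegral_lintegral_swap (μ := volume.restrict (Ioi (0:ℝ)))
      (ν := volume.restrict (Ioi (0:ℝ)))
      (f := fun x u => ENNReal.ofReal (x ^ (p-1) * Real.exp (-(x*u)) * g u)) hmeas.aemeasurable
  have hL : ∫⁻ x in Ioi (0:ℝ), ∫⁻ u in Ioi (0:ℝ),
        ENNReal.ofReal (x ^ (p-1) * Real.exp (-(x*u)) * g u)
      = ENNReal.ofReal ((1/α) * (Nat.factorial k : ℝ)) := by
    rw [← hX]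
    apply lintegral_congr_ae
    filter_upwards [ae_restrict_mem measurableSet_Ioi] with x hx
    have hx0 : (0:ℝ) < x := hx
    calc ∫⁻ u in Ioi (0:ℝ), ENNReal.ofReal (x ^ (p-1) * Real.exp (-(x*u)) * g u)
        = ∫⁻ u in Ioi (0:ℝ), ENNReal.ofReal (x^(p-1))
            * ENNReal.ofReal (Real.exp (-(x*u)) * g u) := by
          apply lintegral_congr_ae; filter_upwards with u
          rw [mul_assoc, ENNReal.ofReal_mul (Real.rpow_nonneg hx0.le _)]
      _ = ENNReal.ofReal (x^(p-1)) * ENNReal.ofReal (Real.exp (-(x^α))) := by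
          rw [lintegral_const_mul' _ _ ENNReal.ofReal_ne_top, hinner_u x hx0]
      _ = ENNReal.ofReal (x ^ (p-1) * Real.exp (-(x^α))) := by
          rw [← ENNReal.ofReal_mul (Real.rpow_nonneg hx0.le _)]
  have hR : ∫⁻ u in Ioi (0:ℝ), ∫⁻ x in Ioi (0:ℝ),
        ENNReal.ofReal (x ^ (p-1) * Real.exp (-(x*u)) * g u)
      = ENNReal.ofReal (Real.Gamma p)
          * ∫⁻ u in Ioi (0:ℝ), ENNReal.ofReal (u ^ (-p) * g u) := by
    rw [← lintegral_const_mul' _ _ ENNReal.ofReal_ne_top]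
    apply lintegral_congr_ae
    filter_upwards [ae_restrict_mem measurableSet_Ioi] with u hu
    have hu0 : (0:ℝ) < u := hu
    calc ∫⁻ x in Ioi (0:ℝ), ENNReal.ofReal (x ^ (p-1) * Real.exp (-(x*u)) * g u)
        = ∫⁻ x in Ioi (0:ℝ), ENNReal.ofReal (x ^ (p-1) * Real.exp (-(x*u)))
            * ENNReal.ofReal (g u) := by
          apply lintegral_congr_ae; filter_upwards [ae_restrict_mem measurableSet_Ioi] with x hx
          rw [ENNReal.ofReal_mul (mul_nonneg (Real.rpow_nonneg (le_of_lt hx) _)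
            (Real.exp_nonneg _))]
      _ = ENNReal.ofReal (Real.Gamma p * u ^ (-p)) * ENNReal.ofReal (g u) := by
          rw [lintegral_mul_const' _ _ ENNReal.ofReal_ne_top, hinner_x u hu0]
      _ = ENNReal.ofReal (Real.Gamma p) * ENNReal.ofReal (u ^ (-p) * g u) := by
          rw [← ENNReal.ofReal_mul (mul_nonneg (Real.Gamma_pos_of_pos hp).le
              (Real.rpow_nonneg hu0.le _)),
            ← ENNReal.ofReal_mul (Real.Gamma_pos_of_pos hp).le]
          congr 1; ring
  have harith : Real.Gamma p * ((Nat.factorial (k+1) : ℝ) / Real.Gamma (p+1))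
      = (1/α) * (Nat.factorial k : ℝ) := by
    have hGp1 : Real.Gamma (p + 1) = p * Real.Gamma p := Real.Gamma_add_one hp.ne'
    have hGp : (0:ℝ) < Real.Gamma p := Real.Gamma_pos_of_pos hp
    rw [hGp1, Nat.factorial_succ]
    rw [hp_def]
    push_cast
    have hk1 : ((k:ℝ)+1) ≠ 0 := by positivity
    field_simp
  have hkey : ENNReal.ofReal (Real.Gamma p)
        * ∫⁻ u in Ioi (0:ℝ), ENNReal.ofReal (u ^ (-p) * g u)
      = ENNReal.ofReal (Real.Gamma p)
        * ENNReal.ofReal ((Nat.factorial (k+1) : ℝ) / Real.Gamma (p+1)) := by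
    rw [← hR, ← hswap, hL, ← ENNReal.ofReal_mul (Real.Gamma_pos_of_pos hp).le, harith]
  have hfin := (ENNReal.mul_right_inj
    (ENNReal.ofReal_pos.2 (Real.Gamma_pos_of_pos hp)).ne' ENNReal.ofReal_ne_top).mp hkey
  exact hfin


/-- If `S` has the standard one-sided `α`-stable density `f_α` (Laplace transform `e^{-x^α}`),
then `M = S^{-α}` has Laplace transform `E[e^{-xM}] = E_α(-x) = Σ_{k≥0} (-x)^k/Γ(αk+1)`
for all `x ≥ 0`. -/
theorem mittagLeffler_laplace (α : ℝ) (hα₀ : 0 < α) (hα₁ : α < 1)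
    (f : ℝ → ℝ)
    (hnonneg : ∀ u > (0:ℝ), 0 ≤ f u)
    (hLT : ∀ x ≥ (0:ℝ), ∫ u in Ioi (0:ℝ), Real.exp (-(x * u)) * f u = Real.exp (-(x ^ α))) :
    ∀ x ≥ (0:ℝ),
      ∫ u in Ioi (0:ℝ), Real.exp (-(x * u ^ (-α))) * f u
        = ∑' k : ℕ, (-x) ^ k / Real.Gamma (α * k + 1) := by
  intro x hx
  -- basic integrability of f and a measurable nonnegative version g
  have hf1 : ∫ u in Ioi (0:ℝ), f u = 1 := by
    have h := hLT 0 le_rfl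
    simpa [Real.zero_rpow hα₀.ne'] using h
  have hfint : IntegrableOn f (Ioi 0) := by
    by_contra hcon
    rw [integral_undef hcon] at hf1
    norm_num at hf1
  set g : ℝ → ℝ := fun u => max ((hfint.1.mk f) u) 0 with hg_def
  have hgmeas : Measurable g := (hfint.1.stronglyMeasurable_mk.measurable).max measurable_const
  have hg0 : ∀ u, 0 ≤ g u := fun u => le_max_right _ _
  have hfg : f =ᵐ[volume.restrict (Ioi 0)] g := by
    filter_upwards [hfint.1.ae_eq_mk, ae_restrict_mem measurableSet_Ioi] with u h1 h2
    rw [hg_def]; simp only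
    rw [← h1, max_eq_left (hnonneg u h2)]
  have hgint : IntegrableOn g (Ioi 0) := hfint.congr hfg
  have hLTg : ∀ y ≥ (0:ℝ), ∫ u in Ioi (0:ℝ), Real.exp (-(y*u)) * g u = Real.exp (-(y^α)) := by
    intro y hy
    rw [← hLT y hy]
    apply integral_congr_ae
    filter_upwards [hfg] with u hu
    rw [hu]
  have hg1 : ∫ u in Ioi (0:ℝ), g u = 1 := by
    rw [← integral_congr_ae hfg, hf1]
  -- moments
  have hmom : ∀ n : ℕ, ∫⁻ u in Ioi (0:ℝ), ENNReal.ofReal (u ^ (-(α*(n:ℕ))) * g u)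
      = ENNReal.ofReal ((Nat.factorial n : ℝ) / Real.Gamma (α*n+1)) := by
    intro n
    cases n with
    | zero =>
        simp only [Nat.cast_zero, mul_zero, neg_zero, Real.rpow_zero, one_mul, zero_add,
          Real.Gamma_one, Nat.factorial_zero, Nat.cast_one, div_one]
        rw [← ofReal_integral_eq_lintegral_ofReal hgint
          (by filter_upwards with u using hg0 u), hg1]
    | succ m => exact moment_succ α hα₀ hα₁ g hgmeas hg0 hgint hLTg m
  have hGpos : ∀ n : ℕ, (0:ℝ) < Real.Gamma (α*n+1) := by
    intro n
    apply Real.Gamma_pos_of_pos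
    have : (0:ℝ) ≤ α * n := by positivity
    linarith
  have hsum := summable_ml α x hα₀ hα₁ hx
  -- the summands
  set F : ℕ → ℝ → ℝ := fun n u => (-(x * u ^ (-α)))^n / (Nat.factorial n : ℝ) * g u with hF
  have hFmeas : ∀ n, AEStronglyMeasurable (F n) (volume.restrict (Ioi (0:ℝ))) := by
    intro n
    apply Measurable.aestronglyMeasurable
    exact ((((measurable_const.mul (my_measurable_rpow_const (-α))).neg.pow_const n).div_const
      _).mul hgmeas)
  have hupow : ∀ u : ℝ, 0 < u → ∀ n : ℕ, (u ^ (-α))^n = u ^ (-(α*(n:ℕ))) := by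
    intro u hu n
    rw [← Real.rpow_natCast (u ^ (-α)) n, ← Real.rpow_mul hu.le]
    congr 1
    ring
  have hnorm : ∀ n : ℕ, ∫⁻ u in Ioi (0:ℝ), ‖F n u‖₊
      = ENNReal.ofReal (x^n / Real.Gamma (α*n+1)) := by
    intro n
    have h1 : ∀ᵐ u ∂(volume.restrict (Ioi (0:ℝ))), (‖F n u‖₊ : ℝ≥0∞)
        = ENNReal.ofReal (x^n / (Nat.factorial n : ℝ))
          * ENNReal.ofReal (u ^ (-(α*(n:ℕ))) * g u) := by
      filter_upwards [ae_restrict_mem measurableSet_Ioi] with u hu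
      have hu0 : (0:ℝ) < u := hu
      have hb : (0:ℝ) < u ^ (-α) := Real.rpow_pos_of_pos hu0 _
      have habs : ‖F n u‖ = x^n / (Nat.factorial n : ℝ) * (u ^ (-(α*(n:ℕ))) * g u) := by
        rw [hF]; simp only
        rw [Real.norm_eq_abs, abs_mul, abs_div, abs_pow, abs_neg,
          abs_of_nonneg (mul_nonneg hx hb.le), abs_of_nonneg (hg0 u),
          abs_of_nonneg (by positivity : (0:ℝ) ≤ (Nat.factorial n : ℝ)),
          mul_pow, hupow u hu0 n]
        ring
      rw [show ((‖F n u‖₊ : ℝ≥0∞)) = ENNReal.ofReal ‖F n u‖ from (ofReal_norm _).symm, habs, ENNReal.ofReal_mul (by positivity)]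
    rw [lintegral_congr_ae h1, lintegral_const_mul' _ _ ENNReal.ofReal_ne_top, hmom n,
      ← ENNReal.ofReal_mul (by positivity)]
    congr 1
    have hne : (Nat.factorial n : ℝ) ≠ 0 := by positivity
    field_simp
  have htsum_norm : ∑' n : ℕ, ∫⁻ u in Ioi (0:ℝ), ‖F n u‖₊ ≠ ⊤ := by
    have : ∑' n : ℕ, ∫⁻ u in Ioi (0:ℝ), (‖F n u‖₊ : ℝ≥0∞)
        = ∑' n : ℕ, ENNReal.ofReal (x^n / Real.Gamma (α*n+1)) := by
      exact tsum_congr hnorm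
    rw [this, ← ENNReal.ofReal_tsum_of_nonneg
      (fun n => div_nonneg (pow_nonneg hx n) (hGpos n).le) hsum]
    exact ENNReal.ofReal_ne_top
  have hexch := integral_tsum hFmeas htsum_norm
  have hexp : ∀ y : ℝ, Real.exp y = ∑' n : ℕ, y^n / (Nat.factorial n : ℝ) := by
    intro y
    rw [Real.exp_eq_exp_ℝ, NormedSpace.exp_eq_tsum_div]
  have hpt : ∀ᵐ u ∂(volume.restrict (Ioi (0:ℝ))),
      Real.exp (-(x * u ^ (-α))) * g u = ∑' n : ℕ, F n u := by
    filter_upwards with u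
    rw [hF]; simp only
    rw [tsum_mul_right, ← hexp]
  have hint_n : ∀ n : ℕ, ∫ u in Ioi (0:ℝ), F n u = (-x)^n / Real.Gamma (α*n+1) := by
    intro n
    have hmem : Integrable (fun u => u ^ (-(α*(n:ℕ))) * g u) (volume.restrict (Ioi (0:ℝ))) := by
      constructor
      · exact ((my_measurable_rpow_const _).mul hgmeas).aestronglyMeasurable
      · rw [hasFiniteIntegral_iff_ofReal (by
          filter_upwards [ae_restrict_mem measurableSet_Ioi] with u hu using
            mul_nonneg (Real.rpow_nonneg (le_of_lt hu) _) (hg0 u))]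
        rw [hmom n]
        exact ENNReal.ofReal_lt_top
    have hval : ∫ u in Ioi (0:ℝ), u ^ (-(α*(n:ℕ))) * g u
        = (Nat.factorial n : ℝ)/Real.Gamma (α*n+1) := by
      rw [integral_eq_lintegral_of_nonneg_ae (by
          filter_upwards [ae_restrict_mem measurableSet_Ioi] with u hu using
            mul_nonneg (Real.rpow_nonneg (le_of_lt hu) _) (hg0 u))
        hmem.1, hmom n, ENNReal.toReal_ofReal (by positivity)]
    have hcong : F n =ᵐ[volume.restrict (Ioi (0:ℝ))]
        fun u => ((-x)^n/(Nat.factorial n : ℝ)) * (u ^ (-(α*(n:ℕ))) * g u) := by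
      filter_upwards [ae_restrict_mem measurableSet_Ioi] with u hu
      have hu0 : (0:ℝ) < u := hu
      rw [hF]; simp only
      rw [show -(x * u^(-α)) = (-x) * u^(-α) by ring, mul_pow, hupow u hu0 n]
      ring
    rw [integral_congr_ae hcong,
      show (fun u => (-x)^n/(Nat.factorial n : ℝ) * (u ^ (-(α*(n:ℕ))) * g u))
        = fun u => ((-x)^n/(Nat.factorial n : ℝ)) • (u ^ (-(α*(n:ℕ))) * g u) from rfl,
      integral_smul, smul_eq_mul, hval]
    have hne : (Nat.factorial n : ℝ) ≠ 0 := by positivity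
    field_simp
  calc ∫ u in Ioi (0:ℝ), Real.exp (-(x * u ^ (-α))) * f u
      = ∫ u in Ioi (0:ℝ), Real.exp (-(x * u ^ (-α))) * g u := by
        apply integral_congr_ae
        filter_upwards [hfg] with u hu
        rw [hu]
    _ = ∫ u in Ioi (0:ℝ), ∑' n : ℕ, F n u := integral_congr_ae hpt
    _ = ∑' n : ℕ, ∫ u in Ioi (0:ℝ), F n u := hexch
    _ = ∑' k : ℕ, (-x) ^ k / Real.Gamma (α * k + 1) := tsum_congr hint_n
end

section
/- For 0<α<1, θ>−α and integer k≥0, define the Markov chain with state-k density p_{α,θ+k}. The transition density from M_{α,θ+k}=t to M_{α,θ+k+1}=u (u>t) equals (α u^{1/α-1}/Γ(1/α−1)) · (p_α(u)/p_α(t)) · (1−t/u)^{1/α−2}, which is independent of k and θ: the Mittag-Leffler Markov chain is time-homogeneous. -/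
open MeasureTheory Real Set

set_option maxHeartbeats 1000000

/-- The beta density on `(0,1)`. -/
noncomputable def betaDensity (a b : ℝ) (v : ℝ) : ℝ :=
  (Ioo (0:ℝ) 1).indicator
    (fun v => Real.Gamma (a + b) / (Real.Gamma a * Real.Gamma b) * v ^ (a - 1) * (1 - v) ^ (b - 1)) v

/-- The Mittag-Leffler density `p_α` built from the standard stable density `f`. -/
noncomputable def mlDensity (α : ℝ) (f : ℝ → ℝ) (t : ℝ) : ℝ :=
  (1 / α) * f (t ^ (-(1/α))) * t ^ (-(1/α) - 1)

/-- The tilted two-parameter Mittag-Leffler density `p_{α,θ}`. -/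
noncomputable def mlDensity2 (α θ : ℝ) (f : ℝ → ℝ) (t : ℝ) : ℝ :=
  Real.Gamma (1 + θ) / Real.Gamma (1 + θ / α) * t ^ (θ / α) * mlDensity α f t

/-- Time-homogeneity of the Mittag-Leffler Markov chain: for `0 < t < u`, the `k → k+1`
transition density `Pr(t,u)/p_{α,θ+k}(t)`, with joint density
`Pr(t,u) = p_{α,θ+k+1}(u)·(1/u)·beta(t/u | (θ+k)/α+1, 1/α-1)`, equals
`(α u^{1/α-1}/Γ(1/α-1)) (p_α(u)/p_α(t)) (1-t/u)^{1/α-2}`, independent of `k` and `θ`. -/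
theorem mittagLeffler_markov_chain_homogeneous (α θ : ℝ) (hα₀ : 0 < α) (hα₁ : α < 1)
    (hθ : -α < θ) (k : ℕ) (f : ℝ → ℝ) (t u : ℝ) (ht : 0 < t) (htu : t < u) :
    (mlDensity2 α (θ + k + 1) f u * (1 / u) * betaDensity ((θ + k) / α + 1) (1 / α - 1) (t / u))
        / mlDensity2 α (θ + k) f t
      = α * u ^ (1 / α - 1) / Real.Gamma (1 / α - 1)
          * (mlDensity α f u / mlDensity α f t) * (1 - t / u) ^ (1 / α - 2) := by
  have hu : 0 < u := ht.trans htu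
  have hα : α ≠ 0 := ne_of_gt hα₀
  have hk0 : (0:ℝ) ≤ (k:ℝ) := Nat.cast_nonneg k
  have hs : -α < θ + (k:ℝ) := by linarith
  have hs1 : (0:ℝ) < 1 + (θ + (k:ℝ)) := by linarith
  have hsa : (0:ℝ) < 1 + (θ + (k:ℝ)) / α := by
    have : (-1 : ℝ) < (θ + (k:ℝ)) / α := by
      rw [lt_div_iff₀ hα₀]; linarith
    linarith
  have hsa1 : (0:ℝ) < (θ + (k:ℝ) + 1) / α := by
    apply div_pos _ hα₀; linarith
  have hb : (0:ℝ) < 1 / α - 1 := by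
    have : (1:ℝ) < 1 / α := by rw [lt_div_iff₀ hα₀]; linarith
    linarith
  have htuI : t / u ∈ Ioo (0:ℝ) 1 := ⟨by positivity, (div_lt_one hu).2 htu⟩
  unfold mlDensity2 betaDensity
  rw [indicator_of_mem htuI]
  -- normalize exponents / Gamma arguments
  rw [show ((θ + (k:ℝ)) / α + 1) + (1 / α - 1) = (θ + (k:ℝ) + 1) / α by
        field_simp; ring,
      show ((θ + (k:ℝ)) / α + 1) - 1 = (θ + (k:ℝ)) / α by ring,
      show (1 / α - 1) - 1 = 1 / α - 2 by ring,
      show ((θ + (k:ℝ)) / α + 1) = 1 + (θ + (k:ℝ)) / α by ring,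
      show (1:ℝ) + (θ + (k:ℝ) + 1) = (1 + (θ + (k:ℝ))) + 1 by ring,
      Real.Gamma_add_one (ne_of_gt hs1),
      show (1:ℝ) + (θ + (k:ℝ) + 1) / α = (θ + (k:ℝ) + 1) / α + 1 by ring,
      Real.Gamma_add_one (ne_of_gt hsa1),
      show (θ + (k:ℝ) + 1) / α = (θ + (k:ℝ)) / α + 1 / α by ring,
      Real.rpow_add hu,
      Real.div_rpow ht.le hu.le,
      show (1 / α - 1 : ℝ) = 1 / α - 1 by rfl]
  rw [Real.rpow_sub hu (1/α) 1, Real.rpow_one]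
  -- abbreviate
  set pt := mlDensity α f t with hpt
  set pu := mlDensity α f u with hpu
  have g1 : (0:ℝ) < Real.Gamma (1 + (θ + (k:ℝ))) := Real.Gamma_pos_of_pos hs1
  have g2 : (0:ℝ) < Real.Gamma (1 + (θ + (k:ℝ)) / α) := Real.Gamma_pos_of_pos hsa
  have g3 : (0:ℝ) < Real.Gamma ((θ + (k:ℝ)) / α + 1 / α) := by
    apply Real.Gamma_pos_of_pos
    have : (θ + (k:ℝ) + 1) / α = (θ + (k:ℝ)) / α + 1 / α := by ring
    rw [← this]; exact hsa1
  have g4 : (0:ℝ) < Real.Gamma (1 / α - 1) := Real.Gamma_pos_of_pos hb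
  have htc : (0:ℝ) < t ^ ((θ + (k:ℝ)) / α) := Real.rpow_pos_of_pos ht _
  have huc : (0:ℝ) < u ^ ((θ + (k:ℝ)) / α) := Real.rpow_pos_of_pos hu _
  have hua : (0:ℝ) < u ^ (1 / α : ℝ) := Real.rpow_pos_of_pos hu _
  have hden : (θ + (k:ℝ)) / α + 1 / α ≠ 0 := by
    have : (θ + (k:ℝ) + 1) / α = (θ + (k:ℝ)) / α + 1 / α := by ring
    rw [← this]; exact ne_of_gt hsa1
  by_cases hptz : pt = 0
  · rw [hptz, mul_zero, div_zero, div_zero, mul_zero, zero_mul]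
  · set G1 := Real.Gamma (1 + (θ + (k:ℝ))) with hG1
    set G2 := Real.Gamma (1 + (θ + (k:ℝ)) / α) with hG2
    set G3 := Real.Gamma ((θ + (k:ℝ)) / α + 1 / α) with hG3
    set G4 := Real.Gamma (1 / α - 1) with hG4
    set Tc := t ^ ((θ + (k:ℝ)) / α) with hTc
    set Uc := u ^ ((θ + (k:ℝ)) / α) with hUc
    set Ua := u ^ (1 / α : ℝ) with hUa
    set B := (1 - t / u) ^ (1 / α - 2 : ℝ) with hB2
    have hden2 : G1 / G2 * Tc * pt ≠ 0 :=
      mul_ne_zero (mul_ne_zero (div_ne_zero g1.ne' g2.ne') htc.ne') hptz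
    rw [div_eq_iff hden2]
    have hθk1 : θ + (k:ℝ) + 1 ≠ 0 := by
      have : (0:ℝ) < θ + (k:ℝ) + 1 := by linarith
      exact this.ne'
    field_simp
    ring
end

section
/- For 0<α<1, θ real, β,γ with −θ<αγ≤β, the generalized Mittag-Leffler moments μ_k = Γ(β+θ)Γ(γ+θ/α+k)/(Γ(γ+θ/α)Γ(β+θ+kα)) with β+θ=1 satisfy Γ(αk+1)·μ_k = Γ(γ+θ/α+k)/Γ(γ+θ/α), and consequently the series −(1/π) Σ_{k≥1} ((−z)^k/k!) sin(παk) Γ(αk+1) μ_k / t^{αk+1} sums, for t^α > z, to (1/π) Im[ t^{αγ+θ−1}/(z e^{−iπα} + t^α)^{γ+θ/α} ]. -/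
open MeasureTheory Real Set

section GLSAux
open Filter Finset

noncomputable def glsA (c : ℝ) (k : ℕ) : ℝ := (∏ i ∈ Finset.range k, (c + i)) / k.factorial

lemma glsA_zero (c : ℝ) : glsA c 0 = 1 := by simp [glsA]

lemma glsA_pos {c : ℝ} (hc : 0 < c) (k : ℕ) : 0 < glsA c k := by
  apply div_pos
  · exact Finset.prod_pos fun i _ => by positivity
  · exact_mod_cast k.factorial_pos

lemma glsA_rec {c : ℝ} (k : ℕ) : (k + 1 : ℝ) * glsA c (k + 1) = (c + k) * glsA c k := by
  have h : ((k + 1).factorial : ℝ) = (k + 1) * k.factorial := by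
    exact_mod_cast Nat.factorial_succ k
  have h2 : (k.factorial : ℝ) ≠ 0 := by exact_mod_cast k.factorial_pos.ne'
  rw [glsA, glsA, Finset.prod_range_succ, h]
  field_simp

lemma glsGamma {c : ℝ} (hc : 0 < c) (k : ℕ) :
    Real.Gamma (c + k) = Real.Gamma c * ∏ i ∈ Finset.range k, (c + i) := by
  induction k with
  | zero => simp
  | succ n ih =>
    have hne : c + n ≠ 0 := by positivity
    have : c + (n + 1 : ℕ) = (c + n) + 1 := by push_cast; ring
    rw [this, Real.Gamma_add_one hne, ih, Finset.prod_range_succ]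
    ring

lemma gls_tendsto_ratio (c : ℝ) :
    Tendsto (fun k : ℕ => (c + (k:ℝ)) / ((k:ℝ) + 1)) atTop (nhds 1) := by
  have h0 : Tendsto (fun n : ℕ => 1 / ((n:ℝ) + 1)) atTop (nhds 0) :=
    tendsto_one_div_add_atTop_nhds_zero_nat
  have h1 : Tendsto (fun k : ℕ => 1 + (c - 1) * (1 / ((k:ℝ) + 1))) atTop (nhds (1 + (c-1)*0)) :=
    tendsto_const_nhds.add (tendsto_const_nhds.mul h0)
  simp only [mul_zero, add_zero] at h1
  refine h1.congr fun k => ?_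
  have : (k:ℝ) + 1 ≠ 0 := by positivity
  field_simp
  ring

lemma gls_summable {c : ℝ} (hc : 0 < c) {x : ℂ} (hx : ‖x‖ < 1) :
    Summable (fun k : ℕ => ((glsA c k : ℝ) : ℂ) * x ^ k) := by
  rcases eq_or_ne x 0 with rfl | hx0
  · apply summable_of_ne_finset_zero (s := {0})
    intro k hk
    simp only [Finset.mem_singleton] at hk
    simp [zero_pow hk]
  · apply summable_of_ratio_test_tendsto_lt_one hx
    · filter_upwards with k
      exact mul_ne_zero (by exact_mod_cast (glsA_pos hc k).ne') (pow_ne_zero _ hx0)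
    · have key : ∀ k : ℕ, ‖((glsA c (k+1) : ℝ) : ℂ) * x ^ (k+1)‖ / ‖((glsA c k : ℝ) : ℂ) * x ^ k‖
          = ((c + k) / ((k:ℝ)+1)) * ‖x‖ := by
        intro k
        have hak : (0:ℝ) < glsA c k := glsA_pos hc k
        have hak1 : (0:ℝ) < glsA c (k+1) := glsA_pos hc (k+1)
        have hxk : (0:ℝ) < ‖x‖ := norm_pos_iff.mpr hx0
        rw [norm_mul, norm_mul, norm_pow, norm_pow, Complex.norm_real, Complex.norm_real,
          Real.norm_eq_abs, Real.norm_eq_abs, abs_of_pos hak, abs_of_pos hak1]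
        rw [pow_succ]
        have hrec := glsA_rec (c := c) k
        have h1 : glsA c (k+1) = (c + k) * glsA c k / ((k:ℝ)+1) := by
          field_simp at hrec ⊢; linarith [hrec]
        rw [h1]
        rw [div_eq_iff (show glsA c k * ‖x‖ ^ k ≠ 0 by positivity)]
        have hk1 : ((k:ℝ)+1) ≠ 0 := by positivity
        field_simp
      have := (gls_tendsto_ratio c).mul_const ‖x‖
      simp only [one_mul] at this
      exact this.congr fun k => (key k).symm

lemma gls_summable_deriv {c : ℝ} (hc : 0 < c) {r : ℝ} (hr0 : 0 < r) (hr : r < 1) :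
    Summable (fun k : ℕ => (k:ℝ) * glsA c k * r ^ (k - 1)) := by
  apply summable_of_ratio_test_tendsto_lt_one hr
  · filter_upwards [eventually_ge_atTop 1] with k hk
    have hk' : (0:ℝ) < (k:ℝ) := by exact_mod_cast hk
    have := glsA_pos hc k
    positivity
  · have h0 : Tendsto (fun n : ℕ => 1 / ((n:ℝ) + 1)) atTop (nhds 0) :=
      tendsto_one_div_add_atTop_nhds_zero_nat
    have T : Tendsto (fun m : ℕ => (1 + c * (1 / ((m:ℝ)+1))) * r) atTop (nhds ((1 + c*0)*r)) :=
      ((tendsto_const_nhds.add (tendsto_const_nhds.mul h0)).mul_const r)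
    simp only [mul_zero, add_zero, one_mul] at T
    have T' := T.comp (tendsto_sub_atTop_nat 1)
    refine T'.congr' ?_
    filter_upwards [eventually_ge_atTop 1] with k hk
    obtain ⟨m, rfl⟩ := Nat.exists_eq_add_of_le hk
    have ham := glsA_pos hc (1 + m)
    have ham2 := glsA_pos hc (1 + m + 1)
    have hm1 : (0:ℝ) < (1 + m : ℕ) := by positivity
    have hrec := glsA_rec (c := c) (1 + m)
    simp only [Function.comp_apply]
    have hsub : 1 + m - 1 = m := by omega
    have hsub2 : 1 + m + 1 - 1 = m + 1 := by omega
    rw [hsub, hsub2]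
    rw [Real.norm_eq_abs, Real.norm_eq_abs, abs_of_pos (by positivity),
      abs_of_pos (by push_cast; positivity)]
    have h1 : glsA c (1 + m + 1) = (c + (1 + m : ℕ)) * glsA c (1 + m) / ((1 + m : ℕ)+1) := by
      rw [eq_div_iff (by positivity)]
      linarith [hrec]
    rw [h1, eq_div_iff (by positivity), pow_succ]
    push_cast
    field_simp
    ring

noncomputable def glsF (c : ℝ) (x : ℂ) : ℂ := ∑' k : ℕ, ((glsA c k : ℝ) : ℂ) * x ^ k

lemma gls_summable0 (c : ℝ) : Summable (fun k : ℕ => ((glsA c k : ℝ):ℂ) * (0:ℂ) ^ k) := by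
  apply summable_of_ne_finset_zero (s := {0})
  intro k hk
  simp only [Finset.mem_singleton] at hk
  simp [zero_pow hk]

lemma glsF_zero (c : ℝ) : glsF c 0 = 1 := by
  rw [glsF, tsum_eq_single 0 (fun k hk => by simp [zero_pow hk])]
  simp [glsA_zero]

lemma gls_hasDerivAt {c : ℝ} (hc : 0 < c) {x : ℂ} (hx : ‖x‖ < 1) :
    HasDerivAt (glsF c) (∑' k : ℕ, ((glsA c k : ℝ):ℂ) * ((k:ℂ) * x ^ (k-1))) x := by
  set r : ℝ := (‖x‖ + 1)/2 with hrdef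
  have hxr : ‖x‖ < r := by rw [hrdef]; linarith
  have hr0 : 0 < r := lt_of_le_of_lt (norm_nonneg x) hxr
  have hr1 : r < 1 := by rw [hrdef]; linarith
  exact hasDerivAt_tsum_of_isPreconnected (gls_summable_deriv hc hr0 hr1)
    Metric.isOpen_ball (convex_ball (0:ℂ) r).isPreconnected
    (fun k y _ => (hasDerivAt_pow k y).const_mul _)
    (fun k y hy => by
      rw [Metric.mem_ball, dist_zero_right] at hy
      rw [norm_mul, norm_mul, Complex.norm_real, Complex.norm_natCast, norm_pow,
        Real.norm_eq_abs, abs_of_pos (glsA_pos hc k)]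
      calc glsA c k * ((k:ℝ) * ‖y‖ ^ (k-1)) ≤ glsA c k * ((k:ℝ) * r ^ (k-1)) := by
            apply mul_le_mul_of_nonneg_left _ (glsA_pos hc k).le
            exact mul_le_mul_of_nonneg_left
              (pow_le_pow_left₀ (norm_nonneg y) hy.le _) (Nat.cast_nonneg k)
        _ = (k:ℝ) * glsA c k * r ^ (k-1) := by ring)
    (Metric.mem_ball_self hr0) (gls_summable0 c)
    (by rwa [Metric.mem_ball, dist_zero_right])

lemma gls_summable_deriv' {c : ℝ} (hc : 0 < c) {x : ℂ} (hx : ‖x‖ < 1) :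
    Summable (fun k : ℕ => ((glsA c k : ℝ):ℂ) * ((k:ℂ) * x ^ (k-1))) := by
  set r : ℝ := (‖x‖ + 1)/2 with hrdef
  have hxr : ‖x‖ ≤ r := by rw [hrdef]; linarith
  have hr0 : 0 < r := lt_of_le_of_lt (norm_nonneg x) (by rw [hrdef]; linarith)
  have hr1 : r < 1 := by rw [hrdef]; linarith
  apply Summable.of_norm_bounded (gls_summable_deriv hc hr0 hr1)
  intro k
  rw [norm_mul, norm_mul, Complex.norm_real, Complex.norm_natCast, norm_pow,
    Real.norm_eq_abs, abs_of_pos (glsA_pos hc k)]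
  calc glsA c k * ((k:ℝ) * ‖x‖ ^ (k-1)) ≤ glsA c k * ((k:ℝ) * r ^ (k-1)) := by
        apply mul_le_mul_of_nonneg_left _ (glsA_pos hc k).le
        exact mul_le_mul_of_nonneg_left
          (pow_le_pow_left₀ (norm_nonneg x) hxr _) (Nat.cast_nonneg k)
    _ = (k:ℝ) * glsA c k * r ^ (k-1) := by ring

lemma gls_ode {c : ℝ} (hc : 0 < c) {x : ℂ} (hx : ‖x‖ < 1) :
    (1 - x) * (∑' k : ℕ, ((glsA c k : ℝ):ℂ) * ((k:ℂ) * x ^ (k-1)))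
      = (c:ℂ) * glsF c x := by
  have hsum : HasSum (fun k : ℕ => ((glsA c k : ℝ):ℂ) * x ^ k) (glsF c x) :=
    (gls_summable hc hx).hasSum
  set D : ℂ := ∑' k : ℕ, ((glsA c k : ℝ):ℂ) * ((k:ℂ) * x ^ (k-1)) with hDdef
  have hD : HasSum (fun k : ℕ => ((glsA c k : ℝ):ℂ) * ((k:ℂ) * x ^ (k-1))) D :=
    (gls_summable_deriv' hc hx).hasSum
  have hshift : HasSum
      (fun k : ℕ => ((glsA c (k+1) : ℝ):ℂ) * (((k:ℂ)+1) * x ^ k)) D := by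
    have h' : HasSum (fun n : ℕ =>
        ((glsA c (n+1) : ℝ):ℂ) * (((n+1 : ℕ):ℂ) * x ^ (n+1-1))) D := by
      apply (hasSum_nat_add_iff
        (f := fun k : ℕ => ((glsA c k : ℝ):ℂ) * ((k:ℂ) * x ^ (k-1))) 1).mpr
      simpa using hD
    convert h' using 2 with k
    push_cast [Nat.add_sub_cancel]
    ring
  have heq : (fun k : ℕ => ((glsA c (k+1) : ℝ):ℂ) * (((k:ℂ)+1) * x ^ k))
      = fun k : ℕ => (c:ℂ) * (((glsA c k : ℝ):ℂ) * x ^ k)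
          + x * (((glsA c k : ℝ):ℂ) * ((k:ℂ) * x ^ (k-1))) := by
    funext k
    have hrec := glsA_rec (c := c) k
    have hrecC : ((k:ℂ)+1) * ((glsA c (k+1) : ℝ):ℂ) = ((c:ℂ) + k) * ((glsA c k : ℝ):ℂ) := by
      have h' := congrArg (fun y : ℝ => (y:ℂ)) hrec
      push_cast at h'
      linear_combination h'
    cases k with
    | zero => simp at hrecC ⊢; linear_combination hrecC
    | succ n =>
      push_cast at hrecC ⊢
      linear_combination x ^ (n+1) * hrecC
  have h2 : HasSum
      (fun k : ℕ => (c:ℂ) * (((glsA c k : ℝ):ℂ) * x ^ k)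
          + x * (((glsA c k : ℝ):ℂ) * ((k:ℂ) * x ^ (k-1))))
      ((c:ℂ) * glsF c x + x * D) := (hsum.mul_left _).add (hD.mul_left _)
  rw [← heq] at h2
  have := hshift.unique h2
  linear_combination this

lemma gls_deriv_zero {c : ℝ} (hc : 0 < c) {y : ℂ} (hy : ‖y‖ < 1) :
    HasDerivAt (fun w : ℂ => (1 - w) ^ (c:ℂ) * glsF c w) 0 y := by
  have hre : 0 < (1 - y).re := by
    have h1 : y.re ≤ ‖y‖ := by
      calc y.re ≤ |y.re| := le_abs_self _
        _ ≤ ‖y‖ := Complex.abs_re_le_norm y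
    simp only [Complex.sub_re, Complex.one_re]
    linarith
  have hslit : (1 - y) ∈ Complex.slitPlane := Complex.mem_slitPlane_iff.mpr (Or.inl hre)
  have hne : (1 - y) ≠ 0 := Complex.slitPlane_ne_zero hslit
  have h1 : HasDerivAt (fun w : ℂ => (1 - w) ^ (c:ℂ))
      ((c:ℂ) * (1 - y) ^ ((c:ℂ) - 1) * (-1)) y :=
    HasDerivAt.cpow_const ((hasDerivAt_id y).const_sub 1) hslit
  have h2 := gls_hasDerivAt hc hy
  have hmul := h1.mul h2
  have hpow : (1 - y) ^ (c:ℂ) = (1 - y) ^ ((c:ℂ) - 1) * (1 - y) := by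
    calc (1 - y) ^ (c:ℂ) = (1 - y) ^ (((c:ℂ) - 1) + 1) := by ring_nf
      _ = (1 - y) ^ ((c:ℂ) - 1) * (1 - y) ^ (1:ℂ) := Complex.cpow_add _ _ hne
      _ = (1 - y) ^ ((c:ℂ) - 1) * (1 - y) := by rw [Complex.cpow_one]
  have hval : (c:ℂ) * (1 - y) ^ ((c:ℂ) - 1) * (-1) * glsF c y
      + (1 - y) ^ (c:ℂ) * (∑' k : ℕ, ((glsA c k : ℝ):ℂ) * ((k:ℂ) * y ^ (k-1))) = 0 := by
    rw [hpow]
    linear_combination (1 - y) ^ ((c:ℂ) - 1) * gls_ode hc hy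
  rw [hval] at hmul
  exact hmul

theorem gls_hasSum_binomial {c : ℝ} (hc : 0 < c) {x : ℂ} (hx : ‖x‖ < 1) :
    HasSum (fun k : ℕ => ((glsA c k : ℝ):ℂ) * x ^ k) ((1 - x) ^ (-(c:ℂ))) := by
  set s : Set ℂ := Metric.ball (0:ℂ) 1 with hsdef
  have hmem : ∀ y : ℂ, y ∈ s → ‖y‖ < 1 := fun y hy => by
    rwa [hsdef, Metric.mem_ball, dist_zero_right] at hy
  have hconst : (1 - x) ^ (c:ℂ) * glsF c x = 1 := by
    have h0 : ContinuousLinearMap.smulRight (1 : ℂ →L[ℂ] ℂ) (0:ℂ) = 0 := by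
      ext; simp
    have key := Convex.is_const_of_fderivWithin_eq_zero (𝕜 := ℂ)
      (f := fun w : ℂ => (1 - w) ^ (c:ℂ) * glsF c w)
      (convex_ball (0:ℂ) 1)
      (fun y hy => (gls_deriv_zero hc (hmem y hy)).differentiableAt.differentiableWithinAt)
      (fun y hy => by
        have hF : HasFDerivAt (fun w : ℂ => (1 - w) ^ (c:ℂ) * glsF c w)
            (0 : ℂ →L[ℂ] ℂ) y := h0 ▸ (gls_deriv_zero hc (hmem y hy)).hasFDerivAt
        exact (hF.hasFDerivWithinAt).fderivWithin (Metric.isOpen_ball.uniqueDiffWithinAt hy))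
      (show x ∈ s by rwa [hsdef, Metric.mem_ball, dist_zero_right])
      (show (0:ℂ) ∈ s from Metric.mem_ball_self one_pos)
    simpa [glsF_zero] using key
  have hne : (1 - x) ^ (c:ℂ) ≠ 0 := by
    rw [Ne, Complex.cpow_eq_zero_iff]
    rintro ⟨h1, -⟩
    have hre : 0 < (1 - x).re := by
      have h1' : x.re ≤ ‖x‖ := by
        calc x.re ≤ |x.re| := le_abs_self _
          _ ≤ ‖x‖ := Complex.abs_re_le_norm x
      simp only [Complex.sub_re, Complex.one_re]
      linarith
    rw [h1] at hre
    simp at hre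
  have hfx : glsF c x = (1 - x) ^ (-(c:ℂ)) := by
    rw [Complex.cpow_neg]
    exact eq_inv_of_mul_eq_one_left (by linear_combination hconst)
  rw [← hfx]
  exact (gls_summable hc hx).hasSum

lemma gls_cpow_real_mul {r : ℝ} (hr : 0 < r) {x : ℂ} (hx : x ≠ 0) (s : ℂ) :
    ((r:ℂ) * x) ^ s = (r:ℂ) ^ s * x ^ s := by
  have hr0 : (r:ℂ) ≠ 0 := by exact_mod_cast hr.ne'
  have hprod : (r:ℂ) * x ≠ 0 := mul_ne_zero hr0 hx
  rw [Complex.cpow_def_of_ne_zero hprod, Complex.cpow_def_of_ne_zero hr0,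
    Complex.cpow_def_of_ne_zero hx, Complex.log_ofReal_mul hr hx, Complex.ofReal_log hr.le,
    add_mul, Complex.exp_add]


end GLSAux

/-- Moments of the generalized Mittag-Leffler law `ML(α,θ|β,γ)` with `β+θ=1` satisfy
`Γ(αk+1)·μ_k = Γ(γ+θ/α+k)/Γ(γ+θ/α)`, and the Pollard-type series
`-(1/π) Σ_{k≥1} ((-z)^k/k!) sin(παk) Γ(αk+1) μ_k / t^{αk+1}` sums, for `t^α > z`, to
`(1/π) Im[ t^{αγ+θ-1}/(z e^{-iπα} + t^α)^{γ+θ/α} ]`. -/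
theorem generalized_lamperti_series (α θ β γ t z : ℝ)
    (hα₀ : 0 < α) (hα₁ : α < 1) (hθγ : -θ < α * γ) (hβγ : α * γ ≤ β) (hβθ : β + θ = 1)
    (ht : 0 < t) (hz : 0 < z) (hzt : z < t ^ α)
    (μ : ℕ → ℝ)
    (hμ : ∀ k : ℕ, μ k = Real.Gamma (β + θ) * Real.Gamma (γ + θ / α + k)
        / (Real.Gamma (γ + θ / α) * Real.Gamma (β + θ + k * α))) :
    (∀ k : ℕ, Real.Gamma (α * k + 1) * μ k
        = Real.Gamma (γ + θ / α + k) / Real.Gamma (γ + θ / α)) ∧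
    -(1 / π) * ∑' k : ℕ,
        ((-z) ^ (k + 1) / (Nat.factorial (k + 1)) * Real.sin (π * α * (k + 1))
          * Real.Gamma (α * (k + 1) + 1) * μ (k + 1) / t ^ (α * (k + 1) + 1))
      = (1 / π) *
          (((t ^ (α * γ + θ - 1) : ℝ) : ℂ) /
            (((z : ℝ) : ℂ) * Complex.exp (-(↑(π * α)) * Complex.I) + ((t ^ α : ℝ) : ℂ))
              ^ (((γ + θ / α : ℝ)) : ℂ)).im := by
  set c : ℝ := γ + θ / α with hcdef
  have hα : α ≠ 0 := hα₀.ne'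
  have hc : 0 < c := by
    rw [hcdef, show γ + θ / α = (α * γ + θ) / α by field_simp]
    have h1 : 0 < α * γ + θ := by linarith
    positivity
  have hΓc : 0 < Real.Gamma c := Real.Gamma_pos_of_pos hc
  -- Part 1
  have part1 : ∀ k : ℕ, Real.Gamma (α * k + 1) * μ k
      = Real.Gamma (c + k) / Real.Gamma c := by
    intro k
    have hk1 : (0:ℝ) < α * k + 1 := by positivity
    have hG : Real.Gamma (α * k + 1) ≠ 0 := (Real.Gamma_pos_of_pos hk1).ne'
    rw [hμ k, hβθ, show (1:ℝ) + (k:ℝ) * α = α * k + 1 by ring, Real.Gamma_one]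
    field_simp
  refine ⟨part1, ?_⟩
  -- setup
  have htα : 0 < t ^ α := Real.rpow_pos_of_pos ht α
  set E : ℂ := Complex.exp (-(↑(π * α)) * Complex.I) with hEdef
  have hEeq : E = Complex.exp ((↑(-(π * α)) : ℝ) * Complex.I) := by
    rw [hEdef]; norm_cast
  set w : ℂ := ((-(z / t ^ α) : ℝ) : ℂ) * E with hwdef
  have hnormE : ‖E‖ = 1 := by
    rw [hEeq, Complex.norm_exp_ofReal_mul_I]
  have hw1 : ‖w‖ < 1 := by
    rw [hwdef, norm_mul, hnormE, mul_one, Complex.norm_real, Real.norm_eq_abs,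
      abs_neg, abs_of_pos (by positivity : 0 < z / t ^ α)]
    rw [div_lt_one htα]
    exact hzt
  have hbin := gls_hasSum_binomial hc hw1
  set S : ℂ := (1 - w) ^ (-(c:ℂ)) with hSdef
  -- shifted sum
  have hbin1 : HasSum (fun k : ℕ => ((glsA c (k+1) : ℝ):ℂ) * w ^ (k+1)) (S - 1) := by
    apply (hasSum_nat_add_iff (f := fun k : ℕ => ((glsA c k : ℝ):ℂ) * w ^ k) 1).mpr
    simpa [glsA_zero] using hbin
  have him : HasSum (fun k : ℕ => (((glsA c (k+1) : ℝ):ℂ) * w ^ (k+1)).im) ((S - 1).im) :=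
    Complex.imCLM.hasSum hbin1
  -- term identification
  have hterm : ∀ j : ℕ,
      (-z) ^ j / (Nat.factorial j : ℝ) * Real.sin (π * α * j)
          * Real.Gamma (α * j + 1) * μ j / t ^ (α * j + 1)
        = -(1 / t) * (((glsA c j : ℝ):ℂ) * w ^ j).im := by
    intro j
    -- complex side
    have hwj : w ^ j = ((((-(z / t ^ α)) ^ j : ℝ)) : ℂ)
        * Complex.exp ((↑(-(π * α) * j) : ℝ) * Complex.I) := by
      rw [hwdef, mul_pow, hEeq, ← Complex.exp_nat_mul]
      norm_cast
      rw [show ((j:ℂ)) * ((↑(-(π * α)) : ℝ) * Complex.I) = ((↑(-(π * α) * j) : ℝ)) * Complex.I by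
        push_cast; ring]
    have hgen : ∀ (r s : ℝ), (((r:ℝ):ℂ) * Complex.exp (((s:ℝ):ℂ) * Complex.I)).im
        = r * Real.sin s := by
      intro r s
      rw [Complex.mul_im, Complex.ofReal_re, Complex.ofReal_im,
        Complex.exp_ofReal_mul_I_im, zero_mul, add_zero]
    have him_j : (((glsA c j : ℝ):ℂ) * w ^ j).im
        = glsA c j * (-(z / t ^ α)) ^ j * Real.sin (-(π * α) * j) := by
      rw [hwj, ← mul_assoc, ← Complex.ofReal_mul, hgen]
    -- real side
    have hgj : Real.Gamma (α * j + 1) * μ j = glsA c j * (Nat.factorial j : ℝ) := by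
      rw [part1 j, glsGamma hc j, glsA]
      have : (Nat.factorial j : ℝ) ≠ 0 := by exact_mod_cast j.factorial_pos.ne'
      field_simp
    have hfact : (Nat.factorial j : ℝ) ≠ 0 := by exact_mod_cast j.factorial_pos.ne'
    have hpowz : (-(z / t ^ α)) ^ j = (-z) ^ j / t ^ (α * j) := by
      rw [show -(z / t ^ α) = (-z) / t ^ α by ring, div_pow, ← Real.rpow_natCast (t ^ α) j,
        ← Real.rpow_mul ht.le]
    have htpow : t ^ (α * j + 1) = t ^ (α * j) * t := by
      rw [Real.rpow_add ht, Real.rpow_one]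
    have hsin : Real.sin (-(π * α) * j) = -Real.sin (π * α * j) := by
      rw [show -(π * α) * j = -(π * α * j) by ring, Real.sin_neg]
    rw [him_j, hsin, hpowz]
    have h1 : (-z) ^ j / (Nat.factorial j : ℝ) * Real.sin (π * α * j)
        * (Real.Gamma (α * j + 1) * μ j) / t ^ (α * j + 1)
        = (-z) ^ j / (Nat.factorial j : ℝ) * Real.sin (π * α * j)
        * (glsA c j * (Nat.factorial j : ℝ)) / t ^ (α * j + 1) := by rw [hgj]
    rw [mul_assoc ((-z) ^ j / (Nat.factorial j : ℝ) * Real.sin (π * α * j)), h1, htpow]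
    have htαj : t ^ (α * j) ≠ 0 := (Real.rpow_pos_of_pos ht _).ne'
    field_simp
  -- sum the series
  have hsum_eq : (∑' k : ℕ,
      ((-z) ^ (k + 1) / (Nat.factorial (k + 1) : ℝ) * Real.sin (π * α * (k + 1))
        * Real.Gamma (α * (k + 1) + 1) * μ (k + 1) / t ^ (α * (k + 1) + 1)))
      = -(1 / t) * ((S - 1).im) := by
    rw [← (him.mul_left (-(1/t))).tsum_eq]
    congr 1
    funext k
    have h := hterm (k + 1)
    push_cast at h ⊢
    exact h
  rw [hsum_eq]
  -- identify RHS
  have hre1w : 0 < (1 - w).re := by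
    have hwre : w.re ≤ ‖w‖ := by
      calc w.re ≤ |w.re| := le_abs_self _
        _ ≤ ‖w‖ := Complex.abs_re_le_norm w
    simp only [Complex.sub_re, Complex.one_re]
    linarith
  have hwne : (1 - w) ≠ 0 := by
    intro h
    rw [h] at hre1w
    simp at hre1w
  have hcpow_ne : (1 - w) ^ (c:ℂ) ≠ 0 := by
    rw [Ne, Complex.cpow_eq_zero_iff]
    rintro ⟨h1, -⟩
    exact hwne h1
  have htαne : ((t ^ α : ℝ) : ℂ) ≠ 0 := by exact_mod_cast htα.ne'
  have hD : ((z : ℝ) : ℂ) * E + ((t ^ α : ℝ) : ℂ) = ((t ^ α : ℝ) : ℂ) * (1 - w) := by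
    rw [hwdef, Complex.ofReal_neg, Complex.ofReal_div]
    field_simp
    ring
  have hαc : α * c = α * γ + θ := by rw [hcdef]; field_simp
  have hpow1 : ((t ^ α : ℝ) : ℂ) ^ ((c:ℝ):ℂ) = ((t ^ (α * γ + θ) : ℝ) : ℂ) := by
    rw [← Complex.ofReal_cpow htα.le c, ← Real.rpow_mul ht.le, hαc]
  have hAne : ((t ^ (α * γ + θ) : ℝ) : ℂ) ≠ 0 := by
    exact_mod_cast (Real.rpow_pos_of_pos ht _).ne'
  have htexp : t ^ (α * γ + θ - 1) = t ^ (α * γ + θ) / t := by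
    rw [Real.rpow_sub ht, Real.rpow_one]
  have hmain : ((t ^ (α * γ + θ - 1) : ℝ) : ℂ) /
      (((z : ℝ) : ℂ) * E + ((t ^ α : ℝ) : ℂ)) ^ ((c:ℝ):ℂ)
      = ((1 / t : ℝ) : ℂ) * S := by
    rw [hD, gls_cpow_real_mul htα hwne, hpow1, hSdef, Complex.cpow_neg, htexp]
    push_cast
    have htne : (t : ℂ) ≠ 0 := by exact_mod_cast ht.ne'
    field_simp
  rw [hmain]
  rw [show (((1 / t : ℝ) : ℂ) * S).im = (1 / t) * S.im by
    rw [Complex.mul_im, Complex.ofReal_re, Complex.ofReal_im, zero_mul, add_zero]]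
  rw [Complex.sub_im, Complex.one_im]
  ring
end
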